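/- arXiv:1304.1757 — 6 statements merged into one kernel-verified Lean document; each statement's English description precedes it below -/
import Mathlib

section
/- (Almost supermartingale convergence.) Let {v_k}, {u_k}, {a_k}, {b_k} be nonnegative random sequences such that E[v_{k+1} | F_k] ≤ (1+a_k)v_k − u_k + b_k for all k ≥ 0 with probability 1, where F_k is the σ-algebra generated by {(v_i,u_i,a_i,b_i) : 0 ≤ i ≤ k}. If Σ_{k=0}^∞ a_k < ∞ and Σ_{k=0}^∞ b_k < ∞ with probability 1, then with probability 1 the sequence {v_k} converges to a nonnegative random variable v, and Σ_{k=0}^∞ u_k < ∞. -/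
/-!
Dividing by the products `∏ i < k, (1 + a i)`, which converge because `∑ a` does, reduces
everything to the case `a = 0`. Then `Z k = v k + ∑ i < k, (u i - b i)` satisfies the
supermartingale inequality, but need not be integrable. Stopping `Z` as soon as a partial sum of
`b` exceeds `n` gives a genuine supermartingale bounded below by `-n`, hence a.e. convergent; on
the event `∑ b ≤ n` it coincides with `Z`. Since `∑ b < ∞` a.s., `Z` converges a.s., which gives
both the convergence of `v` and `∑ u < ∞`.
-/

open MeasureTheory Filter Finset Topology

lemma one_le_prod_range_one_add {a : ℕ → ℝ} (ha : ∀ i, 0 ≤ a i) (k : ℕ) :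
    1 ≤ ∏ i ∈ range k, (1 + a i) :=
  Finset.one_le_prod fun i _ => le_add_of_nonneg_right (ha i)

lemma prod_range_one_add_le_exp_tsum {a : ℕ → ℝ} (ha : ∀ i, 0 ≤ a i) (ha_sum : Summable a)
    (k : ℕ) : ∏ i ∈ range k, (1 + a i) ≤ Real.exp (∑' i, a i) :=
  (Real.prod_one_add_le_exp_sum _ ha).trans
    (Real.exp_le_exp.2 (ha_sum.sum_le_tsum _ fun i _ => ha i))

lemma exists_tendsto_and_summable_of_tendsto_add_sum_sub {v u b : ℕ → ℝ} (hv : ∀ k, 0 ≤ v k)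
    (hu : ∀ k, 0 ≤ u k) (hb : Summable b) {c : ℝ}
    (hZ : Tendsto (fun k => v k + ∑ i ∈ range k, (u i - b i)) atTop (𝓝 c)) :
    (∃ c, Tendsto v atTop (𝓝 c)) ∧ Summable u := by
  have hS : Tendsto (fun k => v k + ∑ i ∈ range k, u i) atTop (𝓝 (c + ∑' i, b i)) :=
    (hZ.add hb.hasSum.tendsto_sum_nat).congr fun k => by simp only [sum_sub_distrib]; ring
  obtain ⟨M, hM⟩ := hS.bddAbove_range
  have hu_sum : Summable u :=
    summable_of_sum_range_le hu fun k => by linarith [hM ⟨k, rfl⟩, hv k]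
  refine ⟨⟨_, (hS.sub hu_sum.hasSum.tendsto_sum_nat).congr fun k => ?_⟩, hu_sum⟩
  ring

lemma exists_tendsto_and_summable_of_div_prod_range_one_add {v u a : ℕ → ℝ} (hu : ∀ k, 0 ≤ u k)
    (ha : ∀ i, 0 ≤ a i) (ha_sum : Summable a)
    (hv : ∃ c, Tendsto (fun k => v k / ∏ i ∈ range k, (1 + a i)) atTop (𝓝 c))
    (hu' : Summable fun k => u k / ∏ i ∈ range (k + 1), (1 + a i)) :
    (∃ c, Tendsto v atTop (𝓝 c)) ∧ Summable u := by
  have hpos : ∀ k, 0 < ∏ i ∈ range k, (1 + a i) := fun k =>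
    zero_lt_one.trans_le (one_le_prod_range_one_add ha k)
  obtain ⟨c, hc⟩ := hv
  have hprod := (Real.multipliable_one_add_of_summable ha_sum).tendsto_prod_tprod_nat
  refine ⟨⟨_, (hc.mul hprod).congr fun k => div_mul_cancel₀ _ (hpos k).ne'⟩, ?_⟩
  refine (hu'.mul_right (Real.exp (∑' i, a i))).of_nonneg_of_le hu fun k => ?_
  calc u k = (u k / ∏ i ∈ range (k + 1), (1 + a i)) * ∏ i ∈ range (k + 1), (1 + a i) :=
        (div_mul_cancel₀ _ (hpos _).ne').symm
    _ ≤ (u k / ∏ i ∈ range (k + 1), (1 + a i)) * Real.exp (∑' i, a i) :=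
        mul_le_mul_of_nonneg_left (prod_range_one_add_le_exp_tsum ha ha_sum _)
          (div_nonneg (hu k) (hpos _).le)

section StoppedAtExit

variable {Ω : Type*}

/-- For antitone `G`, this is `Z` stopped at the first index `j` with `ω ∉ G j`. -/
noncomputable def stoppedAtExit (G : ℕ → Set Ω) (Z : ℕ → Ω → ℝ) (k : ℕ) : Ω → ℝ :=
  Z 0 + ∑ j ∈ range k, (G j).indicator (Z (j + 1) - Z j)

variable {G : ℕ → Set Ω} {Z : ℕ → Ω → ℝ}

lemma stoppedAtExit_succ (k : ℕ) :
    stoppedAtExit G Z (k + 1) = stoppedAtExit G Z k + (G k).indicator (Z (k + 1) - Z k) := by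
  simp only [stoppedAtExit, sum_range_succ, add_assoc]

lemma stoppedAtExit_apply_of_forall_mem {k : ℕ} {ω : Ω} (h : ∀ j < k, ω ∈ G j) :
    stoppedAtExit G Z k ω = Z k ω := by
  have hsum : ∑ j ∈ range k, (G j).indicator (Z (j + 1) - Z j) ω
      = ∑ j ∈ range k, (Z (j + 1) ω - Z j ω) :=
    sum_congr rfl fun j hj => Set.indicator_of_mem (h j (mem_range.1 hj)) _
  simp only [stoppedAtExit, Pi.add_apply, Finset.sum_apply, hsum, sum_range_sub (fun j => Z j ω)]
  ring

lemma exists_stoppedAtExit_apply_eq (hG : Antitone G) (k : ℕ) (ω : Ω) :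
    ∃ m, (∀ j < m, ω ∈ G j) ∧ stoppedAtExit G Z k ω = Z m ω := by
  induction k with
  | zero => exact ⟨0, by simp, by simp [stoppedAtExit]⟩
  | succ k ih =>
    by_cases hk : ω ∈ G k
    · have hmem : ∀ j < k + 1, ω ∈ G j := fun j hj => hG (Nat.le_of_lt_succ hj) hk
      exact ⟨k + 1, hmem, stoppedAtExit_apply_of_forall_mem hmem⟩
    · rwa [stoppedAtExit_succ, Pi.add_apply, Set.indicator_of_notMem hk, add_zero]

variable [m0 : MeasurableSpace Ω] {μ : Measure Ω} {ℱ : Filtration ℕ m0}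

lemma supermartingale_stoppedAtExit [IsFiniteMeasure μ] (hG : ∀ j, MeasurableSet[ℱ j] (G j))
    (hZ : StronglyAdapted ℱ Z) (hZ0 : Integrable (Z 0) μ)
    (hint : ∀ j, Integrable ((G j).indicator (Z (j + 1) - Z j)) μ)
    (hcond : ∀ j, μ[(G j).indicator (Z (j + 1) - Z j) | ℱ j] ≤ᵐ[μ] 0) :
    Supermartingale (stoppedAtExit G Z) ℱ μ := by
  have hadapted : StronglyAdapted ℱ (stoppedAtExit G Z) := fun k =>
    ((hZ 0).mono (ℱ.mono (Nat.zero_le k))).add <| Finset.stronglyMeasurable_sum _ fun j hj =>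
      have hjk : j < k := mem_range.1 hj
      (((hZ (j + 1)).mono (ℱ.mono hjk)).sub ((hZ j).mono (ℱ.mono hjk.le))).indicator
        (ℱ.mono hjk.le _ (hG j))
  have hint' : ∀ k, Integrable (stoppedAtExit G Z k) μ := fun k =>
    hZ0.add (integrable_finsetSum' _ fun j _ => hint j)
  refine supermartingale_nat hadapted hint' fun k => ?_
  rw [stoppedAtExit_succ]
  filter_upwards [condExp_add (hint' k) (hint k) (ℱ k), hcond k] with ω hadd hneg
  rw [hadd, Pi.add_apply, condExp_of_stronglyMeasurable (ℱ.le k) (hadapted k) (hint' k)]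
  linarith [show μ[(G k).indicator (Z (k + 1) - Z k) | ℱ k] ω ≤ 0 from hneg]

lemma MeasureTheory.Supermartingale.exists_ae_tendsto_of_bddBelow [IsFiniteMeasure μ]
    {X : ℕ → Ω → ℝ} (hX : Supermartingale X ℱ μ) {c : ℝ} (hc : ∀ k, ∀ᵐ ω ∂μ, c ≤ X k ω) :
    ∀ᵐ ω ∂μ, ∃ l, Tendsto (fun k => X k ω) atTop (𝓝 l) := by
  set R := ∫ ω, X 0 ω ∂μ + 2 * |c| * μ.real Set.univ
  have hbdd : ∀ k, eLpNorm ((-X) k) 1 μ ≤ ENNReal.ofReal R := by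
    intro k
    have hnorm : ∀ᵐ ω ∂μ, ‖X k ω‖ ≤ X k ω + 2 * |c| := by
      filter_upwards [hc k] with ω hω
      rw [Real.norm_eq_abs, abs_le]
      constructor <;> linarith [neg_abs_le c, le_abs_self c]
    have hmean : ∫ ω, X k ω ∂μ ≤ ∫ ω, X 0 ω ∂μ := by
      simpa using hX.setIntegral_le (Nat.zero_le k) MeasurableSet.univ
    rw [Pi.neg_apply, eLpNorm_neg, eLpNorm_one_eq_lintegral_enorm,
      ← ofReal_integral_norm_eq_lintegral_enorm (hX.integrable k)]
    refine ENNReal.ofReal_le_ofReal ?_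
    calc ∫ ω, ‖X k ω‖ ∂μ ≤ ∫ ω, (X k ω + 2 * |c|) ∂μ :=
          integral_mono_ae (hX.integrable k).norm ((hX.integrable k).add (integrable_const _))
            hnorm
      _ = ∫ ω, X k ω ∂μ + 2 * |c| * μ.real Set.univ := by
          rw [integral_add (hX.integrable k) (integrable_const _), integral_const, smul_eq_mul,
            mul_comm]
      _ ≤ R := by linarith
  filter_upwards [hX.neg.exists_ae_tendsto_of_bdd hbdd] with ω ⟨l, hl⟩
  exact ⟨-l, by simpa using hl.neg⟩

lemma MeasureTheory.Supermartingale.exists_ae_tendsto_of_stoppedAtExit [IsFiniteMeasure μ]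
    (hX : Supermartingale (stoppedAtExit G Z) ℱ μ) (hG : Antitone G) {c : ℝ}
    (hc : ∀ᵐ ω ∂μ, ∀ m, (∀ j < m, ω ∈ G j) → c ≤ Z m ω) :
    ∀ᵐ ω ∂μ, (∀ j, ω ∈ G j) → ∃ l, Tendsto (fun k => Z k ω) atTop (𝓝 l) := by
  have hbdd : ∀ k, ∀ᵐ ω ∂μ, c ≤ stoppedAtExit G Z k ω := fun k => by
    filter_upwards [hc] with ω hω
    obtain ⟨m, hm, heq⟩ := exists_stoppedAtExit_apply_eq hG k ω
    exact heq ▸ hω m hm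
  filter_upwards [hX.exists_ae_tendsto_of_bddBelow hbdd] with ω ⟨l, hl⟩ hmem
  exact ⟨l, hl.congr fun k => stoppedAtExit_apply_of_forall_mem fun j _ => hmem j⟩

end StoppedAtExit

section RobbinsSiegmund

variable {Ω : Type*} [m0 : MeasurableSpace Ω] {μ : Measure Ω} {ℱ : Filtration ℕ m0}
  {v u b : ℕ → Ω → ℝ}

lemma MeasureTheory.StronglyAdapted.measurableSet_forall_sum_range_le (hb : StronglyAdapted ℱ b)
    (n : ℝ) (j : ℕ) : MeasurableSet[ℱ j] {ω | ∀ i ≤ j, ∑ l ∈ range (i + 1), b l ω ≤ n} := by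
  simp only [Set.ofPred_forall]
  refine MeasurableSet.iInter fun i => MeasurableSet.iInter fun hij => ?_
  exact measurableSet_le (Finset.measurable_sum _ fun l hl => ((hb l).mono
    (ℱ.mono ((Nat.le_of_lt_succ (mem_range.1 hl)).trans hij))).measurable) measurable_const

lemma supermartingale_stoppedAtExit_of_condExp_le_sub_add [IsFiniteMeasure μ]
    (hv : StronglyAdapted ℱ v) (hu : StronglyAdapted ℱ u) (hb : StronglyAdapted ℱ b)
    (hv_int : ∀ k, Integrable (v k) μ)
    (hnonneg : ∀ᵐ ω ∂μ, ∀ k, 0 ≤ v k ω ∧ 0 ≤ u k ω ∧ 0 ≤ b k ω)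
    (hrec : ∀ k, μ[v (k + 1) | ℱ k] ≤ᵐ[μ] v k - u k + b k) (n : ℕ) :
    Supermartingale (stoppedAtExit (fun j => {ω | ∀ i ≤ j, ∑ l ∈ range (i + 1), b l ω ≤ (n : ℝ)})
      (fun k => v k + ∑ i ∈ range k, (u i - b i))) ℱ μ := by
  set G : ℕ → Set Ω := fun j => {ω | ∀ i ≤ j, ∑ l ∈ range (i + 1), b l ω ≤ (n : ℝ)}
  have hG : ∀ j, MeasurableSet[ℱ j] (G j) := hb.measurableSet_forall_sum_range_le n
  have hbG : ∀ᵐ ω ∂μ, ∀ j, ω ∈ G j → b j ω ≤ n := by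
    filter_upwards [hnonneg] with ω hω j hj
    exact (single_le_sum (f := fun i => b i ω) (fun i _ => (hω i).2.2)
      (self_mem_range_succ j)).trans (hj j le_rfl)
  have hincr : ∀ j, (v (j + 1) + ∑ i ∈ range (j + 1), (u i - b i))
      - (v j + ∑ i ∈ range j, (u i - b i)) = v (j + 1) + (u j - v j - b j) := fun j => by
    rw [sum_range_succ]; ring
  have hW_meas : ∀ j, StronglyMeasurable[ℱ j] ((G j).indicator (u j - v j - b j)) := fun j =>
    (((hu j).sub (hv j)).sub (hb j)).indicator (hG j)
  -- On `G j`, `0 ≤ u j ≤ v j + b j - μ[v (j + 1) | ℱ j] ≤ v j + n`.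
  have hW_int : ∀ j, Integrable ((G j).indicator (u j - v j - b j)) μ := fun j => by
    refine ((hv_int j).add (integrable_const (n : ℝ))).mono'
      ((hW_meas j).mono (ℱ.le j)).aestronglyMeasurable ?_
    filter_upwards [hnonneg, hbG, hrec j,
      condExp_nonneg (m := ℱ j) (hnonneg.mono fun ω h => (h (j + 1)).1)] with ω hω hbω hrecω hce
    by_cases hωG : ω ∈ G j
    · simp only [Set.indicator_of_mem hωG, Pi.sub_apply, Pi.add_apply, Pi.zero_apply,
        Real.norm_eq_abs, abs_le] at hrecω hce ⊢
      constructor <;> linarith [(hω j).1, (hω j).2.1, hbω j hωG]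
    · simp only [Set.indicator_of_notMem hωG, norm_zero, Pi.add_apply]
      linarith [(hω j).1, n.cast_nonneg (α := ℝ)]
  have hZ : StronglyAdapted ℱ (fun k => v k + ∑ i ∈ range k, (u i - b i)) := fun k =>
    (hv k).add (Finset.stronglyMeasurable_sum _ fun i hi =>
      (((hu i).sub (hb i)).mono (ℱ.mono (mem_range.1 hi).le)))
  refine supermartingale_stoppedAtExit hG hZ (by simpa using hv_int 0) (fun j => ?_) (fun j => ?_)
  · rw [hincr, Set.indicator_add']
    exact ((hv_int (j + 1)).indicator (ℱ.le j _ (hG j))).add (hW_int j)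
  · rw [hincr, Set.indicator_add']
    filter_upwards [condExp_add ((hv_int (j + 1)).indicator (ℱ.le j _ (hG j))) (hW_int j) (ℱ j),
      condExp_indicator (hv_int (j + 1)) (hG j), hrec j] with ω hadd hind hrecω
    rw [hadd, Pi.add_apply, hind, condExp_of_stronglyMeasurable (ℱ.le j) (hW_meas j) (hW_int j)]
    by_cases hωG : ω ∈ G j
    · simp only [Set.indicator_of_mem hωG, Pi.sub_apply, Pi.add_apply, Pi.zero_apply] at hrecω ⊢
      linarith
    · simp [Set.indicator_of_notMem hωG]

theorem ae_exists_tendsto_and_summable_of_condExp_le_sub_add [IsFiniteMeasure μ]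
    (hv : StronglyAdapted ℱ v) (hu : StronglyAdapted ℱ u) (hb : StronglyAdapted ℱ b)
    (hv_int : ∀ k, Integrable (v k) μ)
    (hnonneg : ∀ᵐ ω ∂μ, ∀ k, 0 ≤ v k ω ∧ 0 ≤ u k ω ∧ 0 ≤ b k ω)
    (hrec : ∀ k, μ[v (k + 1) | ℱ k] ≤ᵐ[μ] v k - u k + b k)
    (hb_sum : ∀ᵐ ω ∂μ, Summable fun k => b k ω) :
    ∀ᵐ ω ∂μ, (∃ c, Tendsto (fun k => v k ω) atTop (𝓝 c)) ∧ Summable fun k => u k ω := by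
  have hlocal : ∀ n : ℕ, ∀ᵐ ω ∂μ, (∀ j, ∀ i ≤ j, ∑ l ∈ range (i + 1), b l ω ≤ (n : ℝ)) →
      ∃ l, Tendsto (fun k => v k ω + ∑ i ∈ range k, (u i ω - b i ω)) atTop (𝓝 l) := by
    intro n
    have hX := supermartingale_stoppedAtExit_of_condExp_le_sub_add hv hu hb hv_int hnonneg hrec n
    refine (hX.exists_ae_tendsto_of_stoppedAtExit (fun j k hjk ω hω i hi => hω i (hi.trans hjk))
      (c := -n) ?_).mono fun ω h hmem => by simpa using h hmem
    filter_upwards [hnonneg] with ω hω m hm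
    have hbm : ∑ i ∈ range m, b i ω ≤ n := by
      cases m with
      | zero => simp
      | succ j => exact hm j (Nat.lt_succ_self j) j le_rfl
    have hum : 0 ≤ ∑ i ∈ range m, u i ω := sum_nonneg fun i _ => (hω i).2.1
    simp only [Pi.add_apply, Finset.sum_apply, Pi.sub_apply, sum_sub_distrib]
    linarith [(hω m).1]
  filter_upwards [ae_all_iff.2 hlocal, hnonneg, hb_sum] with ω hZ hω hbω
  obtain ⟨n, hn⟩ := exists_nat_ge (∑' i, b i ω)
  obtain ⟨l, hl⟩ := hZ n fun j i _ =>
    (hbω.sum_le_tsum _ fun l _ => (hω l).2.2).trans hn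
  exact exists_tendsto_and_summable_of_tendsto_add_sum_sub (fun k => (hω k).1)
    (fun k => (hω k).2.1) hbω hl

lemma MeasureTheory.StronglyAdapted.measurable_prod_range_one_add {a : ℕ → Ω → ℝ}
    (ha : StronglyAdapted ℱ a) {j k : ℕ} (hjk : j ≤ k + 1) : Measurable[ℱ k] fun ω => ∏ i ∈ range j, (1 + a i ω) :=
  Finset.measurable_prod _ fun i hi =>
    measurable_const.add ((ha i).mono (ℱ.mono (by rw [mem_range] at hi; omega))).measurable

lemma condExp_div_prod_range_one_add_le {a : ℕ → Ω → ℝ} (ha : StronglyAdapted ℱ a)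
    (ha_nonneg : ∀ᵐ ω ∂μ, ∀ i, 0 ≤ a i ω) {k : ℕ} (hv_int : Integrable (v (k + 1)) μ)
    (hrec : μ[v (k + 1) | ℱ k] ≤ᵐ[μ] fun ω => (1 + a k ω) * v k ω - u k ω + b k ω) :
    μ[fun ω => v (k + 1) ω / ∏ i ∈ range (k + 1), (1 + a i ω) | ℱ k] ≤ᵐ[μ] fun ω =>
      v k ω / ∏ i ∈ range k, (1 + a i ω) - u k ω / ∏ i ∈ range (k + 1), (1 + a i ω)
        + b k ω / ∏ i ∈ range (k + 1), (1 + a i ω) := by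
  set P : ℕ → Ω → ℝ := fun j ω => ∏ i ∈ range j, (1 + a i ω)
  have hP_one : ∀ᵐ ω ∂μ, ∀ j, 1 ≤ P j ω := by
    filter_upwards [ha_nonneg] with ω hω j using one_le_prod_range_one_add hω j
  have hP_inv : Measurable[ℱ k] fun ω => (P (k + 1) ω)⁻¹ :=
    (ha.measurable_prod_range_one_add le_rfl).inv
  have hint : Integrable ((fun ω => (P (k + 1) ω)⁻¹) * v (k + 1)) μ := by
    refine hv_int.mono ((hP_inv.mono (ℱ.le k) le_rfl).aestronglyMeasurable.mul
      hv_int.aestronglyMeasurable) ?_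
    filter_upwards [hP_one] with ω hω
    rw [Pi.mul_apply, norm_mul, norm_inv, Real.norm_of_nonneg (zero_le_one.trans (hω _))]
    exact mul_le_of_le_one_left (norm_nonneg _) (inv_le_one_of_one_le₀ (hω _))
  have hpull := condExp_mul_of_stronglyMeasurable_left hP_inv.stronglyMeasurable hint hv_int
  have hdiv : (fun ω => v (k + 1) ω / ∏ i ∈ range (k + 1), (1 + a i ω))
      = (fun ω => (P (k + 1) ω)⁻¹) * v (k + 1) := funext fun ω => div_eq_inv_mul _ _
  rw [hdiv]
  filter_upwards [hpull, hrec, hP_one, ha_nonneg] with ω hω hrecω hPω haω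
  have hsucc : P (k + 1) ω = P k ω * (1 + a k ω) := prod_range_succ _ _
  rw [hω, Pi.mul_apply]
  calc (P (k + 1) ω)⁻¹ * μ[v (k + 1) | ℱ k] ω
      ≤ (P (k + 1) ω)⁻¹ * ((1 + a k ω) * v k ω - u k ω + b k ω) :=
        mul_le_mul_of_nonneg_left hrecω (inv_nonneg.2 (zero_le_one.trans (hPω _)))
    _ = v k ω / P k ω - u k ω / P (k + 1) ω + b k ω / P (k + 1) ω := by
        have : 1 + a k ω ≠ 0 := by linarith [haω k]
        rw [hsucc]; field_simp

theorem ae_exists_tendsto_and_summable_of_condExp_le_mul_sub_add [IsFiniteMeasure μ]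
    {a : ℕ → Ω → ℝ} (hv : StronglyAdapted ℱ v) (hu : StronglyAdapted ℱ u)
    (ha : StronglyAdapted ℱ a) (hb : StronglyAdapted ℱ b) (hv_int : ∀ k, Integrable (v k) μ)
    (hnonneg : ∀ᵐ ω ∂μ, ∀ k, 0 ≤ v k ω ∧ 0 ≤ u k ω ∧ 0 ≤ a k ω ∧ 0 ≤ b k ω)
    (hrec : ∀ k, μ[v (k + 1) | ℱ k] ≤ᵐ[μ] fun ω => (1 + a k ω) * v k ω - u k ω + b k ω)
    (ha_sum : ∀ᵐ ω ∂μ, Summable fun k => a k ω) (hb_sum : ∀ᵐ ω ∂μ, Summable fun k => b k ω) :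
    ∀ᵐ ω ∂μ, (∃ c, 0 ≤ c ∧ Tendsto (fun k => v k ω) atTop (𝓝 c)) ∧
      Summable fun k => u k ω := by
  set P : ℕ → Ω → ℝ := fun j ω => ∏ i ∈ range j, (1 + a i ω)
  have ha_nonneg : ∀ᵐ ω ∂μ, ∀ i, 0 ≤ a i ω := hnonneg.mono fun ω h i => (h i).2.2.1
  have hP_one : ∀ᵐ ω ∂μ, ∀ j, 1 ≤ P j ω := by
    filter_upwards [ha_nonneg] with ω hω j using one_le_prod_range_one_add hω j
  have hP : ∀ {j k}, j ≤ k + 1 → Measurable[ℱ k] (P j) := ha.measurable_prod_range_one_add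
  have hv' : ∀ k, Measurable[ℱ k] fun ω => v k ω / P k ω := fun k =>
    (hv k).measurable.div (hP k.le_succ)
  have hnormalized := ae_exists_tendsto_and_summable_of_condExp_le_sub_add
    (v := fun k ω => v k ω / P k ω) (u := fun k ω => u k ω / P (k + 1) ω)
    (b := fun k ω => b k ω / P (k + 1) ω) (fun k => (hv' k).stronglyMeasurable)
    (fun k => ((hu k).measurable.div (hP le_rfl)).stronglyMeasurable)
    (fun k => ((hb k).measurable.div (hP le_rfl)).stronglyMeasurable)
    (fun k => (hv_int k).mono ((hv' k).mono (ℱ.le k) le_rfl).aestronglyMeasurable <| by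
        filter_upwards [hP_one] with ω hPω
        rw [norm_div]
        exact div_le_self (norm_nonneg _) ((hPω k).trans (le_abs_self _)))
    (by filter_upwards [hnonneg, hP_one] with ω hω hPω k
        have hPpos : ∀ j, 0 ≤ P j ω := fun j => zero_le_one.trans (hPω j)
        exact ⟨div_nonneg (hω k).1 (hPpos _), div_nonneg (hω k).2.1 (hPpos _),
          div_nonneg (hω k).2.2.2 (hPpos _)⟩)
    (fun k => condExp_div_prod_range_one_add_le ha ha_nonneg (hv_int (k + 1)) (hrec k))
    (by filter_upwards [hb_sum, hnonneg, hP_one] with ω hbω hω hPω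
        exact hbω.of_nonneg_of_le (fun k => div_nonneg (hω k).2.2.2 (zero_le_one.trans (hPω _)))
          fun k => div_le_self (hω k).2.2.2 (hPω _))
  filter_upwards [hnormalized, hnonneg, ha_sum] with ω ⟨hvω, huω⟩ hω haω
  obtain ⟨⟨c, hc⟩, hu_sum⟩ := exists_tendsto_and_summable_of_div_prod_range_one_add
    (fun k => (hω k).2.1) (fun i => (hω i).2.2.1) haω hvω huω
  exact ⟨⟨c, ge_of_tendsto' hc fun k => (hω k).1, hc⟩, hu_sum⟩

end RobbinsSiegmund

lemma MeasureTheory.Filtration.natural_eq_comap_fin {Ω β : Type*} [MeasurableSpace Ω]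
    [TopologicalSpace β] [TopologicalSpace.MetrizableSpace β] [MeasurableSpace β] [BorelSpace β]
    (H : ℕ → Ω → β) (hH : ∀ i, StronglyMeasurable (H i)) (k : ℕ) :
    Filtration.natural H hH k =
      MeasurableSpace.comap (fun ω (i : Fin (k + 1)) => H i ω) inferInstance := by
  rw [MeasurableSpace.comap_process_pi]
  exact le_antisymm (iSup₂_le fun j hj => le_iSup_of_le ⟨j, Nat.lt_succ_of_le hj⟩ le_rfl)
    (iSup_le fun i => le_iSup₂_of_le (i : ℕ) (Nat.le_of_lt_succ i.2) le_rfl)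

/-- **Almost supermartingale convergence (Robbins–Siegmund; Lemma 1).**
Let `v, u, a, b` be nonnegative random sequences with
`E[v_{k+1} | F_k] ≤ (1+a_k)v_k − u_k + b_k` a.s. for all `k`, where `F_k` is generated
by the history `{(v_i,u_i,a_i,b_i) : i ≤ k}`. If `∑ a_k < ∞` and `∑ b_k < ∞` a.s.,
then a.s. `v_k` converges to some nonnegative limit and `∑ u_k < ∞`. -/
theorem almost_supermartingale_convergence
    {Ω : Type*} [MeasurableSpace Ω] (μ : Measure Ω) [IsProbabilityMeasure μ]
    (v u a b : ℕ → Ω → ℝ)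
    (hv_meas : ∀ k, Measurable (v k)) (hu_meas : ∀ k, Measurable (u k))
    (ha_meas : ∀ k, Measurable (a k)) (hb_meas : ∀ k, Measurable (b k))
    (hv_int : ∀ k, Integrable (v k) μ)
    (F : ℕ → MeasurableSpace Ω)
    (hF : ∀ k, F k = MeasurableSpace.comap
      (fun ω => fun i : Fin (k+1) => (v i ω, u i ω, a i ω, b i ω)) inferInstance)
    (hnonneg : ∀ᵐ ω ∂μ, ∀ k, 0 ≤ v k ω ∧ 0 ≤ u k ω ∧ 0 ≤ a k ω ∧ 0 ≤ b k ω)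
    (hrec : ∀ k, ∀ᵐ ω ∂μ,
      (μ[v (k+1) | F k]) ω ≤ (1 + a k ω) * v k ω - u k ω + b k ω)
    (ha_sum : ∀ᵐ ω ∂μ, Summable (fun k => a k ω))
    (hb_sum : ∀ᵐ ω ∂μ, Summable (fun k => b k ω)) :
    ∀ᵐ ω ∂μ,
      (∃ c : ℝ, 0 ≤ c ∧ Tendsto (fun k => v k ω) atTop (nhds c)) ∧
      Summable (fun k => u k ω) := by
  set H : ℕ → Ω → ℝ × ℝ × ℝ × ℝ := fun k ω => (v k ω, u k ω, a k ω, b k ω)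
  have hH : ∀ k, StronglyMeasurable (H k) := fun k =>
    ((hv_meas k).prodMk ((hu_meas k).prodMk ((ha_meas k).prodMk (hb_meas k)))).stronglyMeasurable
  set ℱ := Filtration.natural H hH
  have hℱ : ∀ k, ℱ k = F k := fun k => by rw [hF, Filtration.natural_eq_comap_fin]
  have hH_adapted : ∀ k, Measurable[ℱ k] (H k) := fun k =>
    (Filtration.stronglyAdapted_natural hH k).measurable
  exact ae_exists_tendsto_and_summable_of_condExp_le_mul_sub_add (ℱ := ℱ)
    (fun k => (measurable_fst.comp (hH_adapted k)).stronglyMeasurable)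
    (fun k => (measurable_fst.comp (measurable_snd.comp (hH_adapted k))).stronglyMeasurable)
    (fun k => (measurable_fst.comp (measurable_snd.comp (measurable_snd.comp
      (hH_adapted k)))).stronglyMeasurable)
    (fun k => (measurable_snd.comp (measurable_snd.comp (measurable_snd.comp
      (hH_adapted k)))).stronglyMeasurable)
    hv_int hnonneg (fun k => hℱ k ▸ hrec k) ha_sum hb_sum
end

section
/- (Projected gradient step inequality, convex case.) Let Y ⊆ ℝ^d be a closed convex set, let φ:ℝ^d→ℝ be convex and differentiable with L-Lipschitz gradient on ℝ^d, let α > 0, x ∈ ℝ^d, and y = Π_Y[x − α∇φ(x)]. Then for all x̌ ∈ Y, all z ∈ ℝ^d, and all scalars τ_1, τ_2 > 0: ‖y−x̌‖² ≤ (1+8α²L²)‖x−x̌‖² − 2α(φ(z)−φ(x̌)) − (3/4)‖y−x‖² + (8+τ_2)α²‖∇φ(x̌)‖² + τ_1α²L²‖z−x̌‖² + (1/τ_1 + 1/τ_2)‖x−z‖². -/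
/-!
The variational inequality of the projection, `⟪x - α∇φ(x) - y, x̌ - y⟫ ≤ 0`, together with the
law of cosines gives `‖y - x̌‖² ≤ ‖x - x̌‖² - ‖y - x‖² + 2α⟪∇φ(x), x̌ - y⟫`. Split
`x̌ - y = (x̌ - x) + (x - y)`: two first-order convexity inequalities give
`⟪∇φ(x), x̌ - x⟫ ≤ φ(x̌) - φ(x) ≤ φ(x̌) - φ(z) + ‖∇φ(z)‖‖x - z‖`, and Cauchy–Schwarz bounds the
other part by `‖∇φ(x)‖‖y - x‖`. The Lipschitz bound `‖∇φ(w)‖ ≤ L‖w - x̌‖ + ‖∇φ(x̌)‖` and Young's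
inequality then turn the two products into the stated terms.
-/

open Set RealInnerProductSpace

theorem ConvexOn.add_le_of_hasFDerivAt {E : Type*} [NormedAddCommGroup E] [NormedSpace ℝ E]
    {s : Set E} {f : E → ℝ} {f' : E →L[ℝ] ℝ} {v w : E} (hf : ConvexOn ℝ s f)
    (hv : v ∈ s) (hw : w ∈ s) (hd : HasFDerivAt f f' v) :
    f v + f' (w - v) ≤ f w := by
  let ℓ : ℝ →ᵃ[ℝ] E := AffineMap.lineMap v w
  have hderiv : HasDerivAt (f ∘ ℓ) (f' (w - v)) 0 := by
    refine HasFDerivAt.comp_hasDerivAt (0 : ℝ) ?_ AffineMap.hasDerivAt_lineMap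
    simpa [ℓ] using hd
  have hslope := (hf.comp_affineMap ℓ).le_slope_of_hasDerivAt (by simpa [ℓ] using hv)
    (by simpa [ℓ] using hw) one_pos hderiv
  simp only [slope_def_field, ℓ, Function.comp_apply, AffineMap.lineMap_apply_zero,
    AffineMap.lineMap_apply_one, sub_zero, div_one] at hslope
  linarith

variable {F : Type*} [NormedAddCommGroup F] [InnerProductSpace ℝ F]

theorem ConvexOn.add_inner_le_of_hasGradientAt [CompleteSpace F] {s : Set F} {f : F → ℝ}
    {g v w : F} (hf : ConvexOn ℝ s f) (hv : v ∈ s) (hw : w ∈ s) (hg : HasGradientAt f g v) :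
    f v + ⟪g, w - v⟫ ≤ f w := by
  simpa using hf.add_le_of_hasFDerivAt hv hw hg.hasFDerivAt

theorem IsMinOn.inner_sub_le_zero_of_convex {K : Set F} (hK : Convex ℝ K) {p y w : F}
    (hy : y ∈ K) (hmin : IsMinOn (dist p) K y) (hw : w ∈ K) : ⟪p - y, w - y⟫ ≤ 0 := by
  have : Nonempty K := ⟨⟨y, hy⟩⟩
  refine (norm_eq_iInf_iff_real_inner_le_zero hK hy).mp ?_ w hw
  refine le_antisymm (le_ciInf fun u => ?_) (ciInf_le ⟨0, ?_⟩ (⟨y, hy⟩ : K))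
  · simpa [dist_eq_norm] using isMinOn_iff.mp hmin u u.2
  · rintro r ⟨u, rfl⟩; exact norm_nonneg _

theorem norm_sub_sq_le_of_isMinOn_dist {K : Set F} (hK : Convex ℝ K) {p y w : F} (hy : y ∈ K)
    (hmin : IsMinOn (dist p) K y) (hw : w ∈ K) (x : F) :
    ‖y - w‖ ^ 2 ≤ ‖x - w‖ ^ 2 - ‖y - x‖ ^ 2 + 2 * ⟪x - p, w - y⟫ := by
  have hvar := hmin.inner_sub_le_zero_of_convex hK hy hw
  have hexpand : ‖x - w‖ ^ 2 = ‖x - y‖ ^ 2 - 2 * ⟪x - y, w - y⟫ + ‖w - y‖ ^ 2 := by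
    rw [← norm_sub_sq_real, sub_sub_sub_cancel_right]
  have hsplit : ⟪x - y, w - y⟫ = ⟪x - p, w - y⟫ + ⟪p - y, w - y⟫ := by
    rw [← inner_add_left, sub_add_sub_cancel]
  rw [norm_sub_rev y x, norm_sub_rev y w]
  linarith

theorem norm_sub_sq_le_of_isMinOn_dist_sub_smul_gradient [CompleteSpace F] {K : Set F}
    (hK : Convex ℝ K) {f : F → ℝ} {g : F → F} (hf : ConvexOn ℝ univ f)
    (hg : ∀ w, HasGradientAt f (g w) w) {α : ℝ} (hα : 0 ≤ α) {x y xc : F} (hy : y ∈ K)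
    (hmin : IsMinOn (dist (x - α • g x)) K y) (hxc : xc ∈ K) (z : F) :
    ‖y - xc‖ ^ 2 ≤ ‖x - xc‖ ^ 2 - ‖y - x‖ ^ 2 - 2 * α * (f z - f xc)
      + 2 * α * (‖g x‖ * ‖y - x‖) + 2 * α * (‖g z‖ * ‖x - z‖) := by
  have hstep := norm_sub_sq_le_of_isMinOn_dist hK hy hmin hxc x
  rw [sub_sub_cancel, real_inner_smul_left] at hstep
  have hsplit : ⟪g x, xc - y⟫ = ⟪g x, xc - x⟫ + ⟪g x, x - y⟫ := by
    rw [← inner_add_right, sub_add_sub_cancel]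
  have hx := hf.add_inner_le_of_hasGradientAt (mem_univ x) (mem_univ xc) (hg x)
  have hz := hf.add_inner_le_of_hasGradientAt (mem_univ z) (mem_univ x) (hg z)
  have hcs_x : ⟪g x, x - y⟫ ≤ ‖g x‖ * ‖y - x‖ :=
    norm_sub_rev y x ▸ real_inner_le_norm _ _
  have hcs_z : -⟪g z, x - z⟫ ≤ ‖g z‖ * ‖x - z‖ :=
    (neg_le_abs _).trans (abs_real_inner_le_norm _ _)
  have hinner : ⟪g x, xc - y⟫ ≤ f xc - f z + ‖g x‖ * ‖y - x‖ + ‖g z‖ * ‖x - z‖ := by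
    linarith
  linarith [mul_le_mul_of_nonneg_left hinner hα]

theorem two_mul_mul_le_sq_div_four_add_of_le_add {α a b p q : ℝ} (hb : 0 ≤ b) (hbpq : b ≤ p + q) :
    2 * α * (b * a) ≤ a ^ 2 / 4 + 8 * α ^ 2 * p ^ 2 + 8 * α ^ 2 * q ^ 2 :=
  calc 2 * α * (b * a) = 2 * (α * b) * a := by ring
    _ ≤ 4 * (α * b) ^ 2 + 4⁻¹ * a ^ 2 := two_mul_le_add_mul_sq (by norm_num)
    _ ≤ 4 * α ^ 2 * (p + q) ^ 2 + 4⁻¹ * a ^ 2 := by rw [mul_pow, ← mul_assoc]; gcongr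
    _ ≤ _ := by nlinarith [sq_nonneg (p - q), sq_nonneg α]

theorem two_mul_mul_le_mul_sq_add_of_le_add {α a b p q τ₁ τ₂ : ℝ} (hα : 0 ≤ α) (ha : 0 ≤ a)
    (hbpq : b ≤ p + q) (hτ₁ : 0 < τ₁) (hτ₂ : 0 < τ₂) :
    2 * α * (b * a) ≤ τ₁ * α ^ 2 * p ^ 2 + τ₂ * α ^ 2 * q ^ 2 + (1 / τ₁ + 1 / τ₂) * a ^ 2 :=
  calc 2 * α * (b * a) ≤ 2 * (α * p) * a + 2 * (α * q) * a := by
        nlinarith [mul_le_mul_of_nonneg_left hbpq (mul_nonneg hα ha)]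
    _ ≤ (τ₁ * (α * p) ^ 2 + τ₁⁻¹ * a ^ 2) + (τ₂ * (α * q) ^ 2 + τ₂⁻¹ * a ^ 2) :=
      add_le_add (two_mul_le_add_mul_sq hτ₁) (two_mul_le_add_mul_sq hτ₂)
    _ = _ := by ring

theorem projected_gradient_step_convex_general
    {d : ℕ} (Y : Set (EuclideanSpace ℝ (Fin d)))
    (hY_convex : Convex ℝ Y)
    (φ : EuclideanSpace ℝ (Fin d) → ℝ)
    (g : EuclideanSpace ℝ (Fin d) → EuclideanSpace ℝ (Fin d))
    (hφ_convex : ConvexOn ℝ Set.univ φ)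
    (hφ_grad : ∀ w, HasGradientAt φ (g w) w)
    (L : ℝ)
    (hlip : ∀ w w', ‖g w - g w'‖ ≤ L * ‖w - w'‖)
    (α : ℝ) (hα : 0 < α)
    (x y : EuclideanSpace ℝ (Fin d))
    -- `y = Π_Y[x − α∇φ(x)]`, characterized as the closest point of `Y`
    (hy_mem : y ∈ Y)
    (hy_proj : ∀ w ∈ Y, dist (x - α • g x) y ≤ dist (x - α • g x) w) :
    ∀ xc ∈ Y, ∀ z : EuclideanSpace ℝ (Fin d), ∀ τ1 τ2 : ℝ, 0 < τ1 → 0 < τ2 →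
      ‖y - xc‖^2 ≤ (1 + 8*α^2*L^2) * ‖x - xc‖^2 - 2*α*(φ z - φ xc)
        - (3/4) * ‖y - x‖^2 + (8 + τ2)*α^2*‖g xc‖^2
        + τ1*α^2*L^2*‖z - xc‖^2 + (1/τ1 + 1/τ2)*‖x - z‖^2 := by
  intro xc hxc z τ1 τ2 hτ1 hτ2
  have hstep := norm_sub_sq_le_of_isMinOn_dist_sub_smul_gradient hY_convex hφ_convex hφ_grad
    hα.le hy_mem (isMinOn_iff.mpr hy_proj) hxc z
  have hgx : ‖g x‖ ≤ L * ‖x - xc‖ + ‖g xc‖ :=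
    (norm_le_insert' _ (g xc)).trans (by linarith [hlip x xc])
  have hgz : ‖g z‖ ≤ L * ‖z - xc‖ + ‖g xc‖ :=
    (norm_le_insert' _ (g xc)).trans (by linarith [hlip z xc])
  linarith [two_mul_mul_le_sq_div_four_add_of_le_add (α := α) (a := ‖y - x‖) (norm_nonneg _) hgx,
    two_mul_mul_le_mul_sq_add_of_le_add (a := ‖x - z‖) hα.le (norm_nonneg _) hgz hτ1 hτ2]

/-- **Projected gradient step inequality, convex case (Lemma 7(a)).**
Let `Y ⊆ ℝ^d` be closed and convex, `φ` convex and differentiable with `L`-Lipschitz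
gradient, `α > 0`, and `y = Π_Y[x − α∇φ(x)]`. Then for all `x̌ ∈ Y`, `z ∈ ℝ^d` and
`τ₁, τ₂ > 0`:
`‖y−x̌‖² ≤ (1+8α²L²)‖x−x̌‖² − 2α(φ(z)−φ(x̌)) − (3/4)‖y−x‖² + (8+τ₂)α²‖∇φ(x̌)‖²
 + τ₁α²L²‖z−x̌‖² + (1/τ₁ + 1/τ₂)‖x−z‖²`. -/
theorem projected_gradient_step_convex
    {d : ℕ} (Y : Set (EuclideanSpace ℝ (Fin d)))
    (hY_closed : IsClosed Y) (hY_convex : Convex ℝ Y)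
    (φ : EuclideanSpace ℝ (Fin d) → ℝ)
    (g : EuclideanSpace ℝ (Fin d) → EuclideanSpace ℝ (Fin d))
    (hφ_convex : ConvexOn ℝ Set.univ φ)
    (hφ_grad : ∀ w, HasGradientAt φ (g w) w)
    (L : ℝ) (hL : 0 ≤ L)
    (hlip : ∀ w w', ‖g w - g w'‖ ≤ L * ‖w - w'‖)
    (α : ℝ) (hα : 0 < α)
    (x y : EuclideanSpace ℝ (Fin d))
    -- `y = Π_Y[x − α∇φ(x)]`, characterized as the closest point of `Y`
    (hy_mem : y ∈ Y)
    (hy_proj : ∀ w ∈ Y, dist (x - α • g x) y ≤ dist (x - α • g x) w) :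
    ∀ xc ∈ Y, ∀ z : EuclideanSpace ℝ (Fin d), ∀ τ1 τ2 : ℝ, 0 < τ1 → 0 < τ2 →
      ‖y - xc‖^2 ≤ (1 + 8*α^2*L^2) * ‖x - xc‖^2 - 2*α*(φ z - φ xc)
        - (3/4) * ‖y - x‖^2 + (8 + τ2)*α^2*‖g xc‖^2
        + τ1*α^2*L^2*‖z - xc‖^2 + (1/τ1 + 1/τ2)*‖x - z‖^2 :=
  projected_gradient_step_convex_general Y hY_convex φ g hφ_convex hφ_grad L hlip α hα x y hy_mem
    hy_proj
end

section
/- (Projected gradient step inequality, strongly convex case.) Let Y ⊆ ℝ^d be a closed convex set, let φ:ℝ^d→ℝ be differentiable with L-Lipschitz gradient on ℝ^d and strongly convex on ℝ^d with constant σ > 0, let α > 0, x ∈ ℝ^d, and y = Π_Y[x − α∇φ(x)]. Then for all x̌ ∈ Y, all z ∈ ℝ^d, and all scalars τ_1, τ_2 > 0: ‖y−x̌‖² ≤ (1−ασ+8α²L²)‖x−x̌‖² − 2α⟨∇φ(x̌), z−x̌⟩ − (3/4)‖y−x‖² + (8+τ_2)α²‖∇φ(x̌)‖² + τ_1α²L²‖z−x̌‖²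 + (1/τ_1 + 1/τ_2)‖x−z‖². -/
/-!
Write `p = x - α g(x)` for the unprojected step. The variational inequality of the projection,
`⟪p - y, x̌ - y⟫ ≤ 0`, gives `‖y - x̌‖² ≤ ‖x - x̌‖² - ‖y - x‖² - 2α⟪g(x), y - x̌⟫`. Splitting
`g(x) = (g(x) - g(x̌)) + g(x̌)`, strong monotonicity of `g` (from strong convexity) produces the
`-2ασ‖x - x̌‖²` term, and the remaining cross terms are bounded by Cauchy–Schwarz, the Lipschitz
bound, and Young's inequality with weights `8, 8, τ₂`. The `τ₁`-terms are pure slack.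
-/

open Metric
open scoped RealInnerProductSpace

section

variable {E : Type*} [NormedAddCommGroup E] [InnerProductSpace ℝ E]

theorem Convex.inner_sub_nonpos_of_forall_dist_le {K : Set E} (hK : Convex ℝ K) {p y : E}
    (hy : y ∈ K) (hmin : ∀ w ∈ K, dist p y ≤ dist p w) {w : E} (hw : w ∈ K) :
    ⟪p - y, w - y⟫ ≤ 0 := by
  have : Nonempty K := ⟨⟨y, hy⟩⟩
  refine (norm_eq_iInf_iff_real_inner_le_zero hK hy).mp ?_ w hw
  refine le_antisymm (le_ciInf fun w => ?_)
    (ciInf_le ⟨0, by rintro r ⟨w, rfl⟩; positivity⟩ (⟨y, hy⟩ : K))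
  simpa [dist_eq_norm] using hmin w w.2

theorem Convex.sq_norm_sub_le_of_projected_step {K : Set E} (hK : Convex ℝ K) {x v y : E}
    {α : ℝ} (hy : y ∈ K) (hmin : ∀ w ∈ K, dist (x - α • v) y ≤ dist (x - α • v) w)
    {w : E} (hw : w ∈ K) :
    ‖y - w‖ ^ 2 ≤ ‖x - w‖ ^ 2 - ‖y - x‖ ^ 2 - 2 * α * ⟪v, y - w⟫ := by
  have hvi := hK.inner_sub_nonpos_of_forall_dist_le hy hmin hw
  have hvi_expand : ⟪x - α • v - y, w - y⟫ = ⟪y - x, y - w⟫ + α * ⟪v, y - w⟫ := by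
    simp only [inner_sub_left, inner_sub_right, real_inner_smul_left]
    ring
  have hsplit : ‖y - w‖ ^ 2 = ‖x - w‖ ^ 2 - ‖y - x‖ ^ 2 + 2 * ⟪y - x, y - w⟫ := by
    rw [show y - w = (y - x) + (x - w) by abel, norm_add_sq_real, inner_add_right,
      real_inner_self_eq_norm_sq]
    ring
  linarith

theorem mul_sq_norm_sub_le_inner_sub_of_strongConvex {φ : E → ℝ} {g : E → E} {σ : ℝ}
    (hstrong : ∀ w w', φ w + ⟪g w, w' - w⟫ + σ / 2 * ‖w' - w‖ ^ 2 ≤ φ w') (x w : E) :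
    σ * ‖x - w‖ ^ 2 ≤ ⟪g x - g w, x - w⟫ := by
  have hxw := hstrong x w
  have hwx := hstrong w x
  rw [norm_sub_rev w x, ← neg_sub x w, inner_neg_right] at hxw
  rw [inner_sub_left]
  linarith

/-- `u, v` play the roles of `g(x), g(w)` for a strongly monotone, Lipschitz map `g`. -/
theorem inner_add_mul_sq_norm_le_of_lipschitz_of_strongly_monotone {u v x w : E} {L σ : ℝ}
    (hlip : ‖u - v‖ ≤ L * ‖x - w‖) (hmono : σ * ‖x - w‖ ^ 2 ≤ ⟪u - v, x - w⟫) (y z : E) :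
    ⟪v, z - w⟫ + σ * ‖x - w‖ ^ 2 ≤
      ⟪u, y - w⟫ + L * ‖x - w‖ * ‖y - x‖ + ‖v‖ * ‖y - x‖ + ‖v‖ * ‖x - z‖ := by
  have hsplit : ⟪u, y - w⟫ = ⟪u - v, x - w⟫ + ⟪u - v, y - x⟫ + ⟪v, y - x⟫ + ⟪v, x - z⟫
      + ⟪v, z - w⟫ := by
    simp only [inner_sub_left, inner_sub_right]
    ring
  have hlip_term : -(L * ‖x - w‖ * ‖y - x‖) ≤ ⟪u - v, y - x⟫ :=
    calc -(L * ‖x - w‖ * ‖y - x‖) ≤ -(‖u - v‖ * ‖y - x‖) := by gcongr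
      _ ≤ ⟪u - v, y - x⟫ := neg_le_of_abs_le (abs_real_inner_le_norm _ _)
  have hyx := neg_le_of_abs_le (abs_real_inner_le_norm v (y - x))
  have hxz := neg_le_of_abs_le (abs_real_inner_le_norm v (x - z))
  linarith

end

theorem projected_gradient_step_strongly_convex_general
    {d : ℕ} (Y : Set (EuclideanSpace ℝ (Fin d)))
    (hY_convex : Convex ℝ Y)
    (φ : EuclideanSpace ℝ (Fin d) → ℝ)
    (g : EuclideanSpace ℝ (Fin d) → EuclideanSpace ℝ (Fin d))
    (L : ℝ)
    (hlip : ∀ w w', ‖g w - g w'‖ ≤ L * ‖w - w'‖)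
    (σ : ℝ) (hσ : 0 < σ)
    -- strong convexity: `φ(w') ≥ φ(w) + ⟨∇φ(w), w'−w⟩ + (σ/2)‖w'−w‖²`
    (hstrong : ∀ w w', φ w + ⟪g w, w' - w⟫ + σ/2 * ‖w' - w‖^2 ≤ φ w')
    (α : ℝ) (hα : 0 < α)
    (x y : EuclideanSpace ℝ (Fin d))
    -- `y = Π_Y[x − α∇φ(x)]`, characterized as the closest point of `Y`
    (hy_mem : y ∈ Y)
    (hy_proj : ∀ w ∈ Y, dist (x - α • g x) y ≤ dist (x - α • g x) w) :
    ∀ xc ∈ Y, ∀ z : EuclideanSpace ℝ (Fin d), ∀ τ1 τ2 : ℝ, 0 < τ1 → 0 < τ2 →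
      ‖y - xc‖^2 ≤ (1 - α*σ + 8*α^2*L^2) * ‖x - xc‖^2 - 2*α*⟪g xc, z - xc⟫
        - (3/4) * ‖y - x‖^2 + (8 + τ2)*α^2*‖g xc‖^2
        + τ1*α^2*L^2*‖z - xc‖^2 + (1/τ1 + 1/τ2)*‖x - z‖^2 := by
  intro xc hxc z τ1 τ2 hτ1 hτ2
  have hstep := hY_convex.sq_norm_sub_le_of_projected_step hy_mem hy_proj hxc
  have hcross := mul_le_mul_of_nonneg_left
    (inner_add_mul_sq_norm_le_of_lipschitz_of_strongly_monotone (hlip x xc)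
      (mul_sq_norm_sub_le_inner_sub_of_strongConvex hstrong x xc) y z)
    (by positivity : (0 : ℝ) ≤ 2 * α)
  have young_lip := two_mul_le_add_mul_sq (a := α * L * ‖x - xc‖) (b := ‖y - x‖)
    (by norm_num : (0 : ℝ) < 8)
  have young_step := two_mul_le_add_mul_sq (a := α * ‖g xc‖) (b := ‖y - x‖)
    (by norm_num : (0 : ℝ) < 8)
  have young_z := two_mul_le_add_mul_sq (a := α * ‖g xc‖) (b := ‖x - z‖) hτ2
  have : 0 ≤ α * σ * ‖x - xc‖ ^ 2 := by positivity
  have : 0 ≤ τ1 * α ^ 2 * L ^ 2 * ‖z - xc‖ ^ 2 := by positivity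
  have : 0 ≤ τ1⁻¹ * ‖x - z‖ ^ 2 := by positivity
  simp only [one_div]
  linarith

/-- **Projected gradient step inequality, strongly convex case (Lemma 7(b)).**
Let `Y ⊆ ℝ^d` be closed and convex, `φ` differentiable with `L`-Lipschitz gradient and
`σ`-strongly convex, `α > 0`, and `y = Π_Y[x − α∇φ(x)]`. Then for all `x̌ ∈ Y`,
`z ∈ ℝ^d` and `τ₁, τ₂ > 0`:
`‖y−x̌‖² ≤ (1−ασ+8α²L²)‖x−x̌‖² − 2α⟨∇φ(x̌), z−x̌⟩ − (3/4)‖y−x‖² + (8+τ₂)α²‖∇φ(x̌)‖²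
 + τ₁α²L²‖z−x̌‖² + (1/τ₁ + 1/τ₂)‖x−z‖²`. -/
theorem projected_gradient_step_strongly_convex
    {d : ℕ} (Y : Set (EuclideanSpace ℝ (Fin d)))
    (hY_closed : IsClosed Y) (hY_convex : Convex ℝ Y)
    (φ : EuclideanSpace ℝ (Fin d) → ℝ)
    (g : EuclideanSpace ℝ (Fin d) → EuclideanSpace ℝ (Fin d))
    (hφ_grad : ∀ w, HasGradientAt φ (g w) w)
    (L : ℝ) (hL : 0 ≤ L)
    (hlip : ∀ w w', ‖g w - g w'‖ ≤ L * ‖w - w'‖)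
    (σ : ℝ) (hσ : 0 < σ)
    -- strong convexity: `φ(w') ≥ φ(w) + ⟨∇φ(w), w'−w⟩ + (σ/2)‖w'−w‖²`
    (hstrong : ∀ w w', φ w + ⟪g w, w' - w⟫ + σ/2 * ‖w' - w‖^2 ≤ φ w')
    (α : ℝ) (hα : 0 < α)
    (x y : EuclideanSpace ℝ (Fin d))
    -- `y = Π_Y[x − α∇φ(x)]`, characterized as the closest point of `Y`
    (hy_mem : y ∈ Y)
    (hy_proj : ∀ w ∈ Y, dist (x - α • g x) y ≤ dist (x - α • g x) w) :
    ∀ xc ∈ Y, ∀ z : EuclideanSpace ℝ (Fin d), ∀ τ1 τ2 : ℝ, 0 < τ1 → 0 < τ2 →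
      ‖y - xc‖^2 ≤ (1 - α*σ + 8*α^2*L^2) * ‖x - xc‖^2 - 2*α*⟪g xc, z - xc⟫
        - (3/4) * ‖y - x‖^2 + (8 + τ2)*α^2*‖g xc‖^2
        + τ1*α^2*L^2*‖z - xc‖^2 + (1/τ1 + 1/τ2)*‖x - z‖^2 :=
  projected_gradient_step_strongly_convex_general Y hY_convex φ g L hlip σ hσ hstrong α hα x y
    hy_mem hy_proj
end

section
/- (Coordinate consensus contraction.) Let {W(k)}_{k≥1} be an iid sequence of random m×m matrices, each realization of which is symmetric, doubly stochastic, and idempotent (W(k)² = W(k)); let W̄ = E[W(k)] and let λ be the second largest eigenvalue of W̄. Let {ε(k)} be random vectors in ℝ^m, and let {F_k} be a filtration such that θ(k−1) is F_{k−1}-measurable and W(k) is independent of F_{k−1}, where the sequence {θ(k)} ⊂ ℝ^m evolves as θ(k) = W(k)θ(k−1) + ε(k) for k ≥ 1. Define Δ(k) = θ(k) − (1/m)𝟏𝟏ᵀθ(k). Then with probability 1, for all k ≥ 1: E[‖Δ(k)‖ | F_{k−1}] ≤ √λ·‖Δ(k−1)‖ + E[‖ε(k)‖ | F_{k−1}].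 -/
/-!
The centering matrix `C = I - 𝟏𝟏ᵀ/m` commutes with every doubly stochastic `W`, so
`Δ(k) = W(k) Δ(k-1) + C ε(k)`, and `C` is an orthogonal projection, so `‖C ε(k)‖ ≤ ‖ε(k)‖`.
Since `W(k)` is independent of `F_{k-1}` while `Δ(k-1)` is `F_{k-1}`-measurable, the
conditional expectation of `‖W(k) Δ(k-1)‖` is `ψ(Δ(k-1))` with `ψ(y) = E‖W y‖`.
As `W` is a symmetric idempotent, `‖W y‖² = yᵀ W y`, so by Jensen `ψ(y)² ≤ yᵀ W̄ y`, and
for `y ⊥ 𝟏` the Rayleigh principle on the `W̄`-invariant subspace `𝟏^⊥` bounds this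
by `λ ‖y‖²`.
-/

open MeasureTheory ProbabilityTheory Matrix
open scoped RealInnerProductSpace

namespace ProbabilityTheory

section Freezing

variable {Ω α β γ : Type*} {m' mΩ : MeasurableSpace Ω} [MeasurableSpace α]
  [MeasurableSpace β] [MeasurableSpace γ] {μ : Measure Ω} {X : Ω → α}

theorem Indep.indepFun_of_measurable (hindep : Indep (MeasurableSpace.comap X inferInstance) m' μ)
    {P : Ω → γ} (hP : Measurable[m'] P) : IndepFun P X μ := by
  rw [IndepFun_iff_Indep]
  exact indep_of_indep_of_le_left hindep.symm hP.comap_le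

theorem IndepFun.integrable_uncurry_of_integrable_comp [IsFiniteMeasure μ] {P : Ω → γ}
    (hPX : IndepFun P X μ) (hP : Measurable P) (hX : Measurable X) {f : γ → α → ℝ}
    (hf : Measurable (Function.uncurry f)) (hint : Integrable (fun ω => f (P ω) (X ω)) μ) :
    Integrable (Function.uncurry f) ((μ.map P).prod (μ.map X)) := by
  rw [← hPX.map_prod_eq_prod_map_map hP.aemeasurable hX.aemeasurable,
    integrable_map_measure hf.aestronglyMeasurable (hP.prodMk hX).aemeasurable]
  exact hint

theorem IndepFun.integrable_integral_comp [IsFiniteMeasure μ] {P : Ω → γ}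
    (hPX : IndepFun P X μ) (hP : Measurable P) (hX : Measurable X) {f : γ → α → ℝ}
    (hf : Measurable (Function.uncurry f)) (hint : Integrable (fun ω => f (P ω) (X ω)) μ) :
    Integrable (fun ω => ∫ x, f (P ω) x ∂(μ.map X)) μ :=
  (integrable_map_measure hf.stronglyMeasurable.integral_prod_right.aestronglyMeasurable
    hP.aemeasurable).1 (hPX.integrable_uncurry_of_integrable_comp hP hX hf hint).integral_prod_left

theorem IndepFun.integral_comp_eq_integral_integral [IsFiniteMeasure μ] {P : Ω → γ}
    (hPX : IndepFun P X μ) (hP : Measurable P) (hX : Measurable X) {f : γ → α → ℝ}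
    (hf : Measurable (Function.uncurry f)) (hint : Integrable (fun ω => f (P ω) (X ω)) μ) :
    ∫ ω, f (P ω) (X ω) ∂μ = ∫ ω, ∫ x, f (P ω) x ∂(μ.map X) ∂μ := by
  calc ∫ ω, f (P ω) (X ω) ∂μ
        = ∫ z, Function.uncurry f z ∂((μ.map P).prod (μ.map X)) := by
        rw [← hPX.map_prod_eq_prod_map_map hP.aemeasurable hX.aemeasurable,
          integral_map (hP.prodMk hX).aemeasurable hf.aestronglyMeasurable]
        rfl
    _ = ∫ ω, ∫ x, f (P ω) x ∂(μ.map X) ∂μ :=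
        (integral_prod _ (hPX.integrable_uncurry_of_integrable_comp hP hX hf hint)).trans
          (integral_map hP.aemeasurable
            hf.stronglyMeasurable.integral_prod_right.aestronglyMeasurable)

theorem condExp_comp_ae_eq_integral_of_indep [IsFiniteMeasure μ] (hm' : m' ≤ mΩ)
    {Y : Ω → β} (hX : Measurable X) (hY : Measurable[m'] Y)
    (hindep : Indep (MeasurableSpace.comap X inferInstance) m' μ) {Φ : α → β → ℝ}
    (hΦ : Measurable (Function.uncurry Φ)) (hint : Integrable (fun ω => Φ (X ω) (Y ω)) μ) :
    μ[fun ω => Φ (X ω) (Y ω) | m'] =ᵐ[μ] fun ω => ∫ x, Φ x (Y ω) ∂(μ.map X) := by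
  classical
  have hYm : Measurable Y := hY.mono hm' le_rfl
  have hΦswap : Measurable (Function.uncurry fun y x => Φ x y) := hΦ.comp measurable_swap
  refine (ae_eq_condExp_of_forall_setIntegral_eq hm' hint
    (fun s _ _ => ((hindep.indepFun_of_measurable hY).integrable_integral_comp
      (f := fun y x => Φ x y) hYm hX hΦswap hint).integrableOn)
    (fun s hs _ => ?_)
    (hΦswap.stronglyMeasurable.integral_prod_right.comp_measurable hY).aestronglyMeasurable).symm
  -- Test against `s ∈ m'` through the pair `(Y, 𝟙_s)`: it is `m'`-measurable, hence
  -- independent of `X`, and Fubini on the product law does the rest.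
  have he : Measurable[m'] (s.indicator fun _ => (1 : ℝ)) := measurable_const.indicator hs
  have hf : Measurable (Function.uncurry fun (p : β × ℝ) x => p.2 * Φ x p.1) :=
    (measurable_fst.snd).mul (hΦ.comp (measurable_snd.prodMk measurable_fst.fst))
  have key := (hindep.indepFun_of_measurable (hY.prodMk he)).integral_comp_eq_integral_integral
    (hYm.prodMk (he.mono hm' le_rfl)) hX hf ?_
  · simp only [integral_const_mul] at key
    simpa only [← integral_indicator (hm' s hs), Set.indicator_apply, ite_mul, one_mul, zero_mul]
      using key.symm
  · refine (hint.indicator (hm' s hs)).congr (ae_of_all _ fun ω => ?_)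
    simp only [Set.indicator_apply, ite_mul, one_mul, zero_mul]

end Freezing

end ProbabilityTheory

theorem LinearMap.IsSymmetric.inner_map_self_le_of_forall_hasEigenvalue_le {E : Type*}
    [NormedAddCommGroup E] [InnerProductSpace ℝ E] [FiniteDimensional ℝ E] {T : E →ₗ[ℝ] E}
    (hT : T.IsSymmetric) {c : ℝ} (hc : ∀ μ, Module.End.HasEigenvalue T μ → μ ≤ c)
    (x : E) :
    ⟪T x, x⟫ ≤ c * ‖x‖ ^ 2 := by
  rcases eq_or_ne x 0 with rfl | hx
  · simp
  have : Nontrivial E := ⟨⟨x, 0, hx⟩⟩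
  have hbdd : BddAbove (Set.range fun y : {y : E // y ≠ 0} => ⟪T y, y⟫ / ‖(y : E)‖ ^ 2) :=
    ⟨_, Set.forall_mem_range.2 fun y =>
      (le_abs_self _).trans (T.toContinuousLinearMap.rayleighQuotient_le_norm y)⟩
  have hquot := le_ciSup hbdd ⟨x, hx⟩
  have hmax := hc _ hT.hasEigenvalue_iSup_of_finiteDimensional
  simp only [RCLike.re_to_real, RCLike.ofReal_real_eq_id, id_eq] at hmax
  rw [div_le_iff₀ (by positivity)] at hquot
  exact hquot.trans (by gcongr)

section Matrices

variable {n : Type*} [Fintype n]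

noncomputable def averagingMatrix (n : Type*) [Fintype n] : Matrix n n ℝ :=
  of fun _ _ => (Fintype.card n : ℝ)⁻¹

theorem averagingMatrix_mul_self : averagingMatrix n * averagingMatrix n = averagingMatrix n := by
  ext i j
  have : Nonempty n := ⟨i⟩
  simp [averagingMatrix, mul_apply]

theorem mul_averagingMatrix {W : Matrix n n ℝ} (hrow : ∀ i, ∑ j, W i j = 1) :
    W * averagingMatrix n = averagingMatrix n := by
  ext i j
  simp [averagingMatrix, mul_apply, ← Finset.sum_mul, hrow]

theorem averagingMatrix_mul {W : Matrix n n ℝ} (hcol : ∀ j, ∑ i, W i j = 1) :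
    averagingMatrix n * W = averagingMatrix n := by
  ext i j
  simp [averagingMatrix, mul_apply, ← Finset.mul_sum, hcol]

theorem integrable_apply_of_nonneg_of_sum_eq_one {Ω : Type*} {mΩ : MeasurableSpace Ω}
    {μ : Measure Ω} [IsFiniteMeasure μ] {V : Ω → Matrix n n ℝ}
    (hV : Measurable fun ω => (fun i j => V ω i j : n → n → ℝ))
    (hnonneg : ∀ ω i j, 0 ≤ V ω i j) (hrow : ∀ ω i, ∑ j, V ω i j = 1) (i j : n) :
    Integrable (fun ω => V ω i j) μ := by
  refine (integrable_const (1 : ℝ)).mono'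
    ((measurable_pi_apply j).comp ((measurable_pi_apply i).comp hV)).aestronglyMeasurable
    (ae_of_all _ fun ω => ?_)
  rw [Real.norm_of_nonneg (hnonneg ω i j), ← hrow ω i]
  exact Finset.single_le_sum (fun j _ => hnonneg ω i j) (Finset.mem_univ j)

variable [DecidableEq n]

namespace Matrix

theorem IsSymm.isStarProjection_toEuclideanCLM {P : Matrix n n ℝ} (hs : P.IsSymm)
    (hi : P * P = P) : IsStarProjection (toEuclideanCLM (𝕜 := ℝ) P) :=
  ⟨by simp [IsIdempotentElem, ← map_mul, hi], by
    rw [IsSelfAdjoint, ← map_star, star_eq_conjTranspose, conjTranspose_eq_transpose_of_trivial,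
      hs.eq]⟩

theorem IsSymm.norm_toEuclideanCLM_apply_le {P : Matrix n n ℝ} (hs : P.IsSymm)
    (hi : P * P = P) (x : EuclideanSpace ℝ n) :
    ‖toEuclideanCLM (𝕜 := ℝ) P x‖ ≤ ‖x‖ :=
  ((toEuclideanCLM (𝕜 := ℝ) P).le_of_opNorm_le
    ((hs.isStarProjection_toEuclideanCLM hi).norm_le _) x).trans_eq (one_mul _)

theorem IsSymm.norm_toEuclideanCLM_apply_sq {P : Matrix n n ℝ} (hs : P.IsSymm)
    (hi : P * P = P) (x : EuclideanSpace ℝ n) :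
    ‖toEuclideanCLM (𝕜 := ℝ) P x‖ ^ 2 = x ⬝ᵥ P *ᵥ x := by
  have h := hs.isStarProjection_toEuclideanCLM hi
  rw [← real_inner_self_eq_norm_sq, ← ContinuousLinearMap.adjoint_inner_right,
    ← ContinuousLinearMap.star_eq_adjoint, h.isSelfAdjoint.star_eq, ← inner_toEuclideanCLM]
  exact congr(⟪x, $(h.isIdempotentElem.eq) x⟫)

theorem IsSymm.dotProduct_mulVec_le_of_sum_eq_zero {A : Matrix n n ℝ} (hA : A.IsSymm)
    (hcol : ∀ j, ∑ i, A i j = 1) {c : ℝ}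
    (hc : c ∈ upperBounds
      {t : ℝ | ∃ y : n → ℝ, y ≠ 0 ∧ ∑ i, y i = 0 ∧ A *ᵥ y = t • y})
    {y : EuclideanSpace ℝ n} (hy : ∑ i, y i = 0) : y ⬝ᵥ A *ᵥ y ≤ c * ‖y‖ ^ 2 := by
  set U := (ℝ ∙ WithLp.toLp 2 (fun _ : n => (1 : ℝ)))ᗮ
  have hmemU (x : EuclideanSpace ℝ n) : x ∈ U ↔ ∑ i, x i = 0 := by
    simp [U, Submodule.mem_orthogonal_singleton_iff_inner_right, PiLp.inner_apply]
  have hinv : ∀ x ∈ U, toEuclideanLin A x ∈ U := by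
    intro x hx
    rw [hmemU] at hx ⊢
    change ∑ i, ∑ j, A i j * x j = 0
    rw [Finset.sum_comm]
    simpa [← Finset.sum_mul, hcol] using hx
  have hT :=
    (isSymmetric_toEuclideanLin_iff.2 (isHermitian_iff_isSymm.2 hA)).restrict_invariant hinv
  have := hT.inner_map_self_le_of_forall_hasEigenvalue_le (c := c) ?_ ⟨y, (hmemU y).2 hy⟩
  · simpa [real_inner_comm, EuclideanSpace.inner_eq_star_dotProduct] using this
  · intro μ hμ
    obtain ⟨v, hv⟩ := hμ.exists_hasEigenvector
    refine hc ⟨v, ?_, (hmemU v).1 v.2, ?_⟩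
    · simpa using hv.2
    · simpa using congrArg (fun w : U => WithLp.ofLp (w : EuclideanSpace ℝ n)) hv.apply_eq_smul

end Matrix

noncomputable def centeringMatrix (n : Type*) [Fintype n] [DecidableEq n] : Matrix n n ℝ :=
  1 - averagingMatrix n

theorem centeringMatrix_mulVec_apply (x : n → ℝ) (i : n) :
    (centeringMatrix n *ᵥ x) i = x i - (∑ j, x j) / Fintype.card n := by
  rw [centeringMatrix, sub_mulVec, one_mulVec]
  simp [averagingMatrix, mulVec, dotProduct, div_eq_inv_mul, Finset.mul_sum]

theorem sum_centeringMatrix_mulVec (x : n → ℝ) : ∑ i, (centeringMatrix n *ᵥ x) i = 0 := by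
  rcases isEmpty_or_nonempty n with hn | hn
  · simp
  simp [centeringMatrix_mulVec_apply, Finset.sum_sub_distrib, Finset.card_univ, mul_div_cancel₀]

theorem isSymm_centeringMatrix : (centeringMatrix n).IsSymm := by
  simp only [centeringMatrix, IsSymm, transpose_sub, transpose_one]
  rfl

theorem centeringMatrix_mul_self : centeringMatrix n * centeringMatrix n = centeringMatrix n := by
  rw [centeringMatrix, sub_mul, mul_sub, mul_sub, averagingMatrix_mul_self]
  simp

theorem commute_centeringMatrix {W : Matrix n n ℝ} (hrow : ∀ i, ∑ j, W i j = 1)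
    (hcol : ∀ j, ∑ i, W i j = 1) : Commute (centeringMatrix n) W := by
  rw [Commute, SemiconjBy, centeringMatrix, sub_mul, mul_sub, mul_averagingMatrix hrow,
    averagingMatrix_mul hcol, one_mul, mul_one]

theorem norm_toEuclideanCLM_centeringMatrix_apply_add_le {W : Matrix n n ℝ}
    (hrow : ∀ i, ∑ j, W i j = 1) (hcol : ∀ j, ∑ i, W i j = 1)
    (θ ε : EuclideanSpace ℝ n) :
    ‖toEuclideanCLM (𝕜 := ℝ) (centeringMatrix n) (toEuclideanCLM (𝕜 := ℝ) W θ + ε)‖ ≤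
      ‖toEuclideanCLM (𝕜 := ℝ) W (toEuclideanCLM (𝕜 := ℝ) (centeringMatrix n) θ)‖ +
        ‖ε‖ := by
  have hcomm := congr(toEuclideanCLM (𝕜 := ℝ) $((commute_centeringMatrix hrow hcol).eq) θ)
  simp only [map_mul, mul_apply_eq_comp] at hcomm
  rw [map_add, hcomm]
  grw [norm_add_le, isSymm_centeringMatrix.norm_toEuclideanCLM_apply_le centeringMatrix_mul_self ε]

theorem measurable_uncurry_norm_toEuclideanCLM_apply :
    Measurable (Function.uncurry fun (x : n → n → ℝ) (y : EuclideanSpace ℝ n) =>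
      ‖toEuclideanCLM (𝕜 := ℝ) (of x) y‖) := by
  have : Continuous fun p : (n → n → ℝ) × EuclideanSpace ℝ n =>
      ‖WithLp.toLp 2 (of p.1 *ᵥ WithLp.ofLp p.2)‖ := by
    fun_prop
  exact this.measurable

section RandomMatrices

variable {Ω : Type*} {m' mΩ : MeasurableSpace Ω} {μ : Measure Ω} {V : Ω → Matrix n n ℝ}

theorem integral_norm_toEuclideanCLM_apply_le_sqrt [IsProbabilityMeasure μ]
    (hint : ∀ i j, Integrable (fun ω => V ω i j) μ) (hs : ∀ ω, (V ω).IsSymm)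
    (hi : ∀ ω, V ω * V ω = V ω) (y : EuclideanSpace ℝ n) :
    ∫ ω, ‖toEuclideanCLM (𝕜 := ℝ) (V ω) y‖ ∂μ ≤
      √(y ⬝ᵥ (of fun i j => ∫ ω, V ω i j ∂μ) *ᵥ y) := by
  set q : Ω → ℝ := fun ω => y ⬝ᵥ V ω *ᵥ y
  have hq_eq (ω : Ω) : q ω = ‖toEuclideanCLM (𝕜 := ℝ) (V ω) y‖ ^ 2 :=
    ((hs ω).norm_toEuclideanCLM_apply_sq (hi ω) y).symm
  have hnorm_eq (ω : Ω) : ‖toEuclideanCLM (𝕜 := ℝ) (V ω) y‖ = √(q ω) := by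
    rw [hq_eq, Real.sqrt_sq (norm_nonneg _)]
  have hq_int : Integrable q μ := by
    simp only [q, dotProduct, mulVec, Finset.mul_sum]
    exact integrable_finsetSum _ fun i _ => integrable_finsetSum _ fun j _ =>
      ((hint i j).mul_const _).const_mul _
  have hq_integral :
      ∫ ω, q ω ∂μ = y ⬝ᵥ (of fun i j => ∫ ω, V ω i j ∂μ) *ᵥ y := by
    simp only [q, dotProduct, mulVec, Finset.mul_sum, of_apply]
    rw [integral_finsetSum _ fun i _ => integrable_finsetSum _ fun j _ =>
      ((hint i j).mul_const _).const_mul _]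
    refine Finset.sum_congr rfl fun i _ => ?_
    rw [integral_finsetSum _ fun j _ => ((hint i j).mul_const _).const_mul _]
    simp only [integral_const_mul, integral_mul_const]
  have hsqrt_int : Integrable (fun ω => √(q ω)) μ := by
    refine (integrable_const ‖y‖).mono'
      (Real.continuous_sqrt.comp_aestronglyMeasurable hq_int.aestronglyMeasurable)
      (ae_of_all _ fun ω => ?_)
    rw [Real.norm_of_nonneg (Real.sqrt_nonneg _), ← hnorm_eq]
    exact (hs ω).norm_toEuclideanCLM_apply_le (hi ω) y
  simp_rw [hnorm_eq, ← hq_integral]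
  refine Real.strictConcaveOn_sqrt.concaveOn.le_map_integral Real.continuous_sqrt.continuousOn
    isClosed_Ici (ae_of_all _ fun ω => ?_) hq_int hsqrt_int
  rw [Set.mem_Ici, hq_eq]
  positivity

theorem integral_norm_toEuclideanCLM_apply_le_sqrt_mul_norm [IsProbabilityMeasure μ]
    (hint : ∀ i j, Integrable (fun ω => V ω i j) μ) (hs : ∀ ω, (V ω).IsSymm)
    (hi : ∀ ω, V ω * V ω = V ω) (hcol : ∀ ω j, ∑ i, V ω i j = 1) {c : ℝ}
    (hc : c ∈ upperBounds {t : ℝ | ∃ y : n → ℝ, y ≠ 0 ∧ ∑ i, y i = 0 ∧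
      (of fun i j => ∫ ω, V ω i j ∂μ) *ᵥ y = t • y})
    {y : EuclideanSpace ℝ n} (hy : ∑ i, y i = 0) :
    ∫ ω, ‖toEuclideanCLM (𝕜 := ℝ) (V ω) y‖ ∂μ ≤ √c * ‖y‖ := by
  set Vbar : Matrix n n ℝ := of fun i j => ∫ ω, V ω i j ∂μ
  have hVbar_symm : Vbar.IsSymm := by
    ext i j
    simp only [Vbar, transpose_apply, of_apply, (hs _).apply]
  have hVbar_col (j : n) : ∑ i, Vbar i j = 1 := by
    simp [Vbar, ← integral_finsetSum _ fun i _ => hint i j, hcol]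
  calc ∫ ω, ‖toEuclideanCLM (𝕜 := ℝ) (V ω) y‖ ∂μ ≤ √(y ⬝ᵥ Vbar *ᵥ y) :=
        integral_norm_toEuclideanCLM_apply_le_sqrt hint hs hi y
    _ ≤ √(c * ‖y‖ ^ 2) :=
        Real.sqrt_le_sqrt (hVbar_symm.dotProduct_mulVec_le_of_sum_eq_zero hVbar_col hc hy)
    _ = √c * ‖y‖ := by rw [Real.sqrt_mul' _ (by positivity), Real.sqrt_sq (norm_nonneg _)]

theorem integrable_norm_toEuclideanCLM_apply
    (hV : Measurable fun ω => (fun i j => V ω i j : n → n → ℝ)) (hs : ∀ ω, (V ω).IsSymm)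
    (hi : ∀ ω, V ω * V ω = V ω) {Y : Ω → EuclideanSpace ℝ n} (hY : Measurable Y)
    (hYint : Integrable (fun ω => ‖Y ω‖) μ) :
    Integrable (fun ω => ‖toEuclideanCLM (𝕜 := ℝ) (V ω) (Y ω)‖) μ :=
  hYint.mono'
    (measurable_uncurry_norm_toEuclideanCLM_apply.comp (hV.prodMk hY)).aestronglyMeasurable
    (ae_of_all _ fun ω => by simpa using (hs ω).norm_toEuclideanCLM_apply_le (hi ω) (Y ω))

theorem condExp_norm_toEuclideanCLM_apply_le [IsProbabilityMeasure μ] (hm' : m' ≤ mΩ)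
    (hV : Measurable fun ω => (fun i j => V ω i j : n → n → ℝ))
    (hindep : Indep
      (MeasurableSpace.comap (fun ω => (fun i j => V ω i j : n → n → ℝ)) inferInstance)
      m' μ)
    (hint : ∀ i j, Integrable (fun ω => V ω i j) μ) (hs : ∀ ω, (V ω).IsSymm)
    (hi : ∀ ω, V ω * V ω = V ω) (hcol : ∀ ω j, ∑ i, V ω i j = 1) {c : ℝ}
    (hc : c ∈ upperBounds {t : ℝ | ∃ y : n → ℝ, y ≠ 0 ∧ ∑ i, y i = 0 ∧
      (of fun i j => ∫ ω, V ω i j ∂μ) *ᵥ y = t • y})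
    {Y : Ω → EuclideanSpace ℝ n} (hY : Measurable[m'] Y) (hY0 : ∀ ω, ∑ i, Y ω i = 0)
    (hYint : Integrable (fun ω => ‖Y ω‖) μ) :
    μ[fun ω => ‖toEuclideanCLM (𝕜 := ℝ) (V ω) (Y ω)‖ | m'] ≤ᵐ[μ]
      fun ω => √c * ‖Y ω‖ := by
  have hYm : Measurable Y := hY.mono hm' le_rfl
  filter_upwards [condExp_comp_ae_eq_integral_of_indep hm' hV hY hindep
    measurable_uncurry_norm_toEuclideanCLM_apply
    (integrable_norm_toEuclideanCLM_apply hV hs hi hYm hYint)] with ω hω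
  refine (le_of_eq hω).trans ?_
  rw [integral_map hV.aemeasurable (f := fun x => ‖toEuclideanCLM (𝕜 := ℝ) (of x) (Y ω)‖)
    (measurable_uncurry_norm_toEuclideanCLM_apply.comp
      (measurable_id.prodMk measurable_const)).aestronglyMeasurable]
  exact integral_norm_toEuclideanCLM_apply_le_sqrt_mul_norm hint hs hi hcol hc (hY0 ω)

theorem condExp_norm_toEuclideanCLM_centeringMatrix_le [IsProbabilityMeasure μ] (hm' : m' ≤ mΩ)
    (hV : Measurable fun ω => (fun i j => V ω i j : n → n → ℝ))
    (hindep : Indep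
      (MeasurableSpace.comap (fun ω => (fun i j => V ω i j : n → n → ℝ)) inferInstance)
      m' μ)
    (hnonneg : ∀ ω i j, 0 ≤ V ω i j) (hrow : ∀ ω i, ∑ j, V ω i j = 1)
    (hcol : ∀ ω j, ∑ i, V ω i j = 1) (hs : ∀ ω, (V ω).IsSymm)
    (hi : ∀ ω, V ω * V ω = V ω) {c : ℝ}
    (hc : c ∈ upperBounds {t : ℝ | ∃ y : n → ℝ, y ≠ 0 ∧ ∑ i, y i = 0 ∧
      (of fun i j => ∫ ω, V ω i j ∂μ) *ᵥ y = t • y})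
    {θ θ' ε : Ω → EuclideanSpace ℝ n} (hθ : Measurable[m'] θ) (hθ' : Measurable θ')
    (hrec : ∀ ω, θ' ω = toEuclideanCLM (𝕜 := ℝ) (V ω) (θ ω) + ε ω)
    (hθ_int : Integrable (fun ω => ‖θ ω‖) μ)
    (hθ'_int : Integrable (fun ω => ‖θ' ω‖) μ) (hε_int : Integrable (fun ω => ‖ε ω‖) μ) :
    ∀ᵐ ω ∂μ,
      μ[fun ω => ‖toEuclideanCLM (𝕜 := ℝ) (centeringMatrix n) (θ' ω)‖ | m'] ω ≤
        √c * ‖toEuclideanCLM (𝕜 := ℝ) (centeringMatrix n) (θ ω)‖ +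
          μ[fun ω => ‖ε ω‖ | m'] ω := by
  set C := toEuclideanCLM (𝕜 := ℝ) (centeringMatrix n)
  have hC_int {Y : Ω → EuclideanSpace ℝ n} (hY : Measurable Y)
      (hY_int : Integrable (fun ω => ‖Y ω‖) μ) : Integrable (fun ω => ‖C (Y ω)‖) μ :=
    integrable_norm_toEuclideanCLM_apply (V := fun _ => centeringMatrix n) measurable_const
      (fun _ => isSymm_centeringMatrix) (fun _ => centeringMatrix_mul_self) hY hY_int
  have hCθ : Measurable[m'] fun ω => C (θ ω) := C.continuous.measurable.comp hθ
  have hCθ_int := hC_int (hθ.mono hm' le_rfl) hθ_int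
  have hVCθ_int := integrable_norm_toEuclideanCLM_apply hV hs hi (hCθ.mono hm' le_rfl) hCθ_int
  have hstep (ω : Ω) :
      ‖C (θ' ω)‖ ≤ ‖toEuclideanCLM (𝕜 := ℝ) (V ω) (C (θ ω))‖ + ‖ε ω‖ := by
    rw [hrec]
    exact norm_toEuclideanCLM_centeringMatrix_apply_add_le (hrow ω) (hcol ω) _ _
  filter_upwards [condExp_mono (hC_int hθ' hθ'_int) (hVCθ_int.add hε_int) (ae_of_all _ hstep),
    condExp_add hVCθ_int hε_int m',
    condExp_norm_toEuclideanCLM_apply_le hm' hV hindep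
      (integrable_apply_of_nonneg_of_sum_eq_one hV hnonneg hrow) hs hi hcol hc hCθ
      (fun ω => by simpa [C] using sum_centeringMatrix_mulVec _) hCθ_int]
    with ω h_mono h_add h_contract
  calc _ ≤ _ := h_mono
    _ = _ := h_add
    _ ≤ _ := add_le_add_left h_contract _

end RandomMatrices

end Matrices

theorem coordinate_consensus_contraction_general
    {m : ℕ}
    {Ω : Type*} [MeasurableSpace Ω] (μ : Measure Ω) [IsProbabilityMeasure μ]
    (W : ℕ → Ω → Matrix (Fin m) (Fin m) ℝ)
    (hW_meas : ∀ k, Measurable fun ω => (fun i j => W k ω i j : Fin m → Fin m → ℝ))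
    (hW_symm : ∀ k ω, (W k ω).IsSymm)
    (hW_nonneg : ∀ k ω i j, 0 ≤ W k ω i j)
    (hW_row : ∀ k ω i, ∑ j, W k ω i j = 1)
    (hW_col : ∀ k ω j, ∑ i, W k ω i j = 1)
    (hW_idem : ∀ k ω, W k ω * W k ω = W k ω)
    -- identically distributed
    (hW_id : ∀ k, 1 ≤ k →
      μ.map (fun ω => (fun i j => W k ω i j : Fin m → Fin m → ℝ)) =
      μ.map (fun ω => (fun i j => W 1 ω i j : Fin m → Fin m → ℝ)))
    (F : Filtration ℕ ‹MeasurableSpace Ω›)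
    -- `W(k)` is independent of `F_{k−1}`
    (hW_indep : ∀ k, 1 ≤ k → Indep
      (MeasurableSpace.comap (fun ω => (fun i j => W k ω i j : Fin m → Fin m → ℝ))
        inferInstance) (F (k-1)) μ)
    (θ ε : ℕ → Ω → EuclideanSpace ℝ (Fin m))
    (hθ_meas : ∀ k, Measurable[F k] (θ k))
    (hε_int : ∀ k, Integrable (fun ω => ‖ε k ω‖) μ)
    (hθ_int : ∀ k, Integrable (fun ω => ‖θ k ω‖) μ)
    -- dynamics: `θ(k) = W(k)θ(k−1) + ε(k)`
    (hrec : ∀ k, 1 ≤ k → ∀ ω i, θ k ω i = (∑ j, W k ω i j * θ (k-1) ω j) + ε k ω i)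
    -- `W̄ = E[W(k)]`
    (Wbar : Matrix (Fin m) (Fin m) ℝ)
    (hWbar : ∀ i j, Wbar i j = ∫ ω, W 1 ω i j ∂μ)
    -- `λ` is the second largest eigenvalue of `W̄`: the largest eigenvalue on `1^⊥`
    (lam : ℝ)
    (hlam : IsGreatest
      {t : ℝ | ∃ y : Fin m → ℝ, y ≠ 0 ∧ ∑ i, y i = 0 ∧ Wbar.mulVec y = t • y} lam)
    -- `Δ(k) = θ(k) − (1/m)𝟏𝟏ᵀθ(k)`
    (Δ : ℕ → Ω → EuclideanSpace ℝ (Fin m))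
    (hΔ : ∀ k ω i, Δ k ω i = θ k ω i - (∑ j, θ k ω j) / m) :
    ∀ k, 1 ≤ k → ∀ᵐ ω ∂μ,
      (μ[(fun ω' => ‖Δ k ω'‖) | F (k-1)]) ω ≤
        Real.sqrt lam * ‖Δ (k-1) ω‖ + (μ[(fun ω' => ‖ε k ω'‖) | F (k-1)]) ω := by
  intro k hk
  obtain ⟨n, rfl⟩ : ∃ n, k = n + 1 := ⟨k - 1, by omega⟩
  have hΔC (j : ℕ) :
      Δ j = fun ω => toEuclideanCLM (𝕜 := ℝ) (centeringMatrix (Fin m)) (θ j ω) := by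
    ext ω i
    simp [hΔ, centeringMatrix_mulVec_apply]
  have hθ_succ (ω : Ω) :
      θ (n + 1) ω = toEuclideanCLM (𝕜 := ℝ) (W (n + 1) ω) (θ n ω) + ε (n + 1) ω := by
    ext i
    simp [hrec (n + 1) hk ω i, mulVec, dotProduct]
  have hmean : (of fun i j => ∫ ω, W (n + 1) ω i j ∂μ) = Wbar := by
    have hid : IdentDistrib (fun ω => (fun i j => W (n + 1) ω i j : Fin m → Fin m → ℝ))
        (fun ω => (fun i j => W 1 ω i j : Fin m → Fin m → ℝ)) μ μ :=
      ⟨(hW_meas _).aemeasurable, (hW_meas 1).aemeasurable, hW_id _ hk⟩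
    ext i j
    rw [of_apply, hWbar]
    exact (hid.comp ((measurable_pi_apply j).comp (measurable_pi_apply i))).integral_eq
  rw [Nat.add_sub_cancel, hΔC, hΔC]
  exact condExp_norm_toEuclideanCLM_centeringMatrix_le (F.le n) (hW_meas _) (hW_indep _ hk)
    (hW_nonneg _) (hW_row _) (hW_col _) (hW_symm _) (hW_idem _) (hmean ▸ hlam.2) (hθ_meas n)
    ((hθ_meas _).mono (F.le _) le_rfl) hθ_succ (hθ_int n) (hθ_int _) (hε_int _)

/-- **Coordinate consensus contraction (Lemma of the disagreement analysis).**
Let `{W(k)}` be iid random symmetric doubly stochastic idempotent `m×m` matrices, with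
`W̄ = E[W(k)]` and `λ` the second largest eigenvalue of `W̄`. Let
`θ(k) = W(k)θ(k−1) + ε(k)`, with `θ(k−1)` being `F_{k−1}`-measurable and `W(k)`
independent of `F_{k−1}`. With `Δ(k) = θ(k) − (1/m)𝟏𝟏ᵀθ(k)`, with probability 1,
`E[‖Δ(k)‖ | F_{k−1}] ≤ √λ·‖Δ(k−1)‖ + E[‖ε(k)‖ | F_{k−1}]` for all `k ≥ 1`. -/
theorem coordinate_consensus_contraction
    {m : ℕ} (hm : 0 < m)
    {Ω : Type*} [MeasurableSpace Ω] (μ : Measure Ω) [IsProbabilityMeasure μ]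
    (W : ℕ → Ω → Matrix (Fin m) (Fin m) ℝ)
    (hW_meas : ∀ k, Measurable fun ω => (fun i j => W k ω i j : Fin m → Fin m → ℝ))
    (hW_symm : ∀ k ω, (W k ω).IsSymm)
    (hW_nonneg : ∀ k ω i j, 0 ≤ W k ω i j)
    (hW_row : ∀ k ω i, ∑ j, W k ω i j = 1)
    (hW_col : ∀ k ω j, ∑ i, W k ω i j = 1)
    (hW_idem : ∀ k ω, W k ω * W k ω = W k ω)
    -- identically distributed
    (hW_id : ∀ k, 1 ≤ k →
      μ.map (fun ω => (fun i j => W k ω i j : Fin m → Fin m → ℝ)) =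
      μ.map (fun ω => (fun i j => W 1 ω i j : Fin m → Fin m → ℝ)))
    (F : Filtration ℕ ‹MeasurableSpace Ω›)
    -- `W(k)` is independent of `F_{k−1}`
    (hW_indep : ∀ k, 1 ≤ k → Indep
      (MeasurableSpace.comap (fun ω => (fun i j => W k ω i j : Fin m → Fin m → ℝ))
        inferInstance) (F (k-1)) μ)
    (θ ε : ℕ → Ω → EuclideanSpace ℝ (Fin m))
    (hθ_meas : ∀ k, Measurable[F k] (θ k))
    (hε_meas : ∀ k, Measurable (ε k))
    (hε_int : ∀ k, Integrable (fun ω => ‖ε k ω‖) μ)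
    (hθ_int : ∀ k, Integrable (fun ω => ‖θ k ω‖) μ)
    -- dynamics: `θ(k) = W(k)θ(k−1) + ε(k)`
    (hrec : ∀ k, 1 ≤ k → ∀ ω i, θ k ω i = (∑ j, W k ω i j * θ (k-1) ω j) + ε k ω i)
    -- `W̄ = E[W(k)]`
    (Wbar : Matrix (Fin m) (Fin m) ℝ)
    (hWbar : ∀ i j, Wbar i j = ∫ ω, W 1 ω i j ∂μ)
    -- `λ` is the second largest eigenvalue of `W̄`: the largest eigenvalue on `1^⊥`
    (lam : ℝ)
    (hlam : IsGreatest
      {t : ℝ | ∃ y : Fin m → ℝ, y ≠ 0 ∧ ∑ i, y i = 0 ∧ Wbar.mulVec y = t • y} lam)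
    -- `Δ(k) = θ(k) − (1/m)𝟏𝟏ᵀθ(k)`
    (Δ : ℕ → Ω → EuclideanSpace ℝ (Fin m))
    (hΔ : ∀ k ω i, Δ k ω i = θ k ω i - (∑ j, θ k ω j) / m) :
    ∀ k, 1 ≤ k → ∀ᵐ ω ∂μ,
      (μ[(fun ω' => ‖Δ k ω'‖) | F (k-1)]) ω ≤
        Real.sqrt lam * ‖Δ (k-1) ω‖ + (μ[(fun ω' => ‖ε k ω'‖) | F (k-1)]) ω :=
  coordinate_consensus_contraction_general μ W hW_meas hW_symm hW_nonneg hW_row hW_col hW_idem hW_id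
    F hW_indep θ ε hθ_meas hε_int hθ_int hrec Wbar hWbar lam hlam Δ hΔ
end

section
/- Let X ⊆ ℝ^d be a nonempty closed convex set, let v_1,…,v_m ∈ ℝ^d, set z_i = Π_X[v_i] for each i, and let z̄ = (1/m)Σ_{ℓ=1}^m z_ℓ and v̄ = (1/m)Σ_{ℓ=1}^m v_ℓ. Then Σ_{i=1}^m ‖z_i − z̄‖ ≤ 2·Σ_{i=1}^m ‖v_i − v̄‖. -/
/-!
Projection onto a convex set is nonexpansive: the variational inequalities at the
projections `z, z'` of `u, v` give `‖z - z'‖² ≤ ⟪u - v, z - z'⟫ ≤ ‖u - v‖ ‖z - z'‖`.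
Since `z i - z̄` is the mean of the differences `z i - z ℓ`, the left-hand side is at most
`m⁻¹ ∑ᵢ ∑ₗ ‖z i - z ℓ‖ ≤ m⁻¹ ∑ᵢ ∑ₗ ‖v i - v ℓ‖`, and routing each `v i - v ℓ` through `v̄`
bounds the double sum by `2 m ∑ᵢ ‖v i - v̄‖`.
-/

open Finset
open scoped InnerProductSpace

section ConvexProjection

variable {E : Type*} [NormedAddCommGroup E] [InnerProductSpace ℝ E] {K : Set E} {u v z z' : E}

theorem real_inner_sub_le_zero_of_isMinOn_dist (hK : Convex ℝ K) (hz : z ∈ K)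
    (hmin : IsMinOn (dist u) K z) : ∀ w ∈ K, ⟪u - z, w - z⟫_ℝ ≤ 0 := by
  refine (norm_eq_iInf_iff_real_inner_le_zero hK hz).mp ?_
  have hmin' : IsMinOn (fun w => ‖u - w‖) K z := by simpa only [← dist_eq_norm] using hmin
  exact (hmin'.iInf_eq hz).symm

theorem norm_sub_le_of_real_inner_le_zero (h : ⟪u - z, z' - z⟫_ℝ ≤ 0)
    (h' : ⟪v - z', z - z'⟫_ℝ ≤ 0) : ‖z - z'‖ ≤ ‖u - v‖ := by
  have hsplit : ⟪u - v, z - z'⟫_ℝ = ‖z - z'‖ ^ 2 - ⟪u - z, z' - z⟫_ℝ - ⟪v - z', z - z'⟫_ℝ := by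
    rw [← real_inner_self_eq_norm_sq]
    simp only [inner_sub_left, inner_sub_right, real_inner_comm]
    ring
  have hsq : ‖z - z'‖ * ‖z - z'‖ ≤ ‖u - v‖ * ‖z - z'‖ := by
    calc ‖z - z'‖ * ‖z - z'‖ ≤ ⟪u - v, z - z'⟫_ℝ := by rw [hsplit, ← sq]; linarith
      _ ≤ ‖u - v‖ * ‖z - z'‖ := real_inner_le_norm _ _
  rcases (norm_nonneg (z - z')).eq_or_lt with hzero | hpos
  · exact hzero ▸ norm_nonneg _
  · exact le_of_mul_le_mul_right hsq hpos

end ConvexProjection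

section Average

variable {ι E F : Type*} [Fintype ι] [SeminormedAddCommGroup E]

theorem sum_sum_norm_sub_le (v : ι → E) (c : E) :
    ∑ i, ∑ j, ‖v i - v j‖ ≤ 2 * Fintype.card ι * ∑ i, ‖v i - c‖ := by
  calc ∑ i, ∑ j, ‖v i - v j‖ ≤ ∑ i, ∑ j, (‖v i - c‖ + ‖v j - c‖) := by
        gcongr with i _ j _
        exact (norm_sub_le_norm_sub_add_norm_sub _ c _).trans_eq (by rw [norm_sub_rev c])
    _ = 2 * Fintype.card ι * ∑ i, ‖v i - c‖ := by
        simp only [sum_add_distrib, sum_const, card_univ, nsmul_eq_mul, ← mul_sum]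
        ring

variable [NormedSpace ℝ E] [SeminormedAddCommGroup F] [NormedSpace ℝ F]

theorem norm_sub_average_le (z : ι → E) (i : ι) :
    ‖z i - (Fintype.card ι : ℝ)⁻¹ • ∑ j, z j‖ ≤ (Fintype.card ι : ℝ)⁻¹ * ∑ j, ‖z i - z j‖ := by
  have hcard : (Fintype.card ι : ℝ) ≠ 0 := Nat.cast_ne_zero.mpr (Fintype.card_pos_iff.mpr ⟨i⟩).ne'
  have hmean : z i - (Fintype.card ι : ℝ)⁻¹ • ∑ j, z j
      = (Fintype.card ι : ℝ)⁻¹ • ∑ j, (z i - z j) := by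
    rw [sum_sub_distrib, smul_sub, sum_const, card_univ, ← Nat.cast_smul_eq_nsmul ℝ, smul_smul,
      inv_mul_cancel₀ hcard, one_smul]
  rw [hmean, norm_smul, norm_inv, Real.norm_natCast]
  gcongr
  exact norm_sum_le _ _

theorem sum_norm_sub_average_le_two_mul {z : ι → F} {v : ι → E}
    (h : ∀ i j, ‖z i - z j‖ ≤ ‖v i - v j‖) :
    ∑ i, ‖z i - (Fintype.card ι : ℝ)⁻¹ • ∑ j, z j‖
      ≤ 2 * ∑ i, ‖v i - (Fintype.card ι : ℝ)⁻¹ • ∑ j, v j‖ := by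
  set n : ℝ := (Fintype.card ι : ℝ)
  set S := ∑ i, ‖v i - n⁻¹ • ∑ j, v j‖
  calc ∑ i, ‖z i - n⁻¹ • ∑ j, z j‖ ≤ ∑ i, n⁻¹ * ∑ j, ‖z i - z j‖ :=
        sum_le_sum fun i _ => norm_sub_average_le z i
    _ ≤ n⁻¹ * ∑ i, ∑ j, ‖v i - v j‖ := by
        rw [← mul_sum]
        gcongr with i _ j _
        exact h i j
    _ ≤ n⁻¹ * (2 * n * S) := by
        gcongr
        exact sum_sum_norm_sub_le v _
    _ = (n⁻¹ * n) * (2 * S) := by ring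
    _ ≤ 2 * S := mul_le_of_le_one_left (by positivity) inv_mul_le_one

end Average

theorem sum_dist_proj_avg_le_general
    {d m : ℕ}
    (X : Set (EuclideanSpace ℝ (Fin d)))
    (hX_convex : Convex ℝ X)
    (v z : Fin m → EuclideanSpace ℝ (Fin d))
    -- `z i = Π_X[v i]`, characterized as the closest point of `X`
    (hz_mem : ∀ i, z i ∈ X)
    (hz_proj : ∀ i, ∀ w ∈ X, dist (v i) (z i) ≤ dist (v i) w) :
    ∑ i, ‖z i - (m : ℝ)⁻¹ • ∑ ℓ, z ℓ‖ ≤ 2 * ∑ i, ‖v i - (m : ℝ)⁻¹ • ∑ ℓ, v ℓ‖ := by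
  have hvar : ∀ i, ∀ w ∈ X, ⟪v i - z i, w - z i⟫_ℝ ≤ 0 := fun i =>
    real_inner_sub_le_zero_of_isMinOn_dist hX_convex (hz_mem i) (isMinOn_iff.mpr (hz_proj i))
  have hlip : ∀ i j, ‖z i - z j‖ ≤ ‖v i - v j‖ := fun i j =>
    norm_sub_le_of_real_inner_le_zero (hvar i _ (hz_mem j)) (hvar j _ (hz_mem i))
  simpa only [Fintype.card_fin] using sum_norm_sub_average_le_two_mul hlip

/-- Let `X ⊆ ℝ^d` be nonempty, closed and convex, `z_i = Π_X[v_i]`,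
`z̄ = (1/m)∑ z_ℓ` and `v̄ = (1/m)∑ v_ℓ`. Then `∑_i ‖z_i − z̄‖ ≤ 2 ∑_i ‖v_i − v̄‖`. -/
theorem sum_dist_proj_avg_le
    {d m : ℕ} (hm : 0 < m)
    (X : Set (EuclideanSpace ℝ (Fin d)))
    (hX_ne : X.Nonempty) (hX_closed : IsClosed X) (hX_convex : Convex ℝ X)
    (v z : Fin m → EuclideanSpace ℝ (Fin d))
    -- `z i = Π_X[v i]`, characterized as the closest point of `X`
    (hz_mem : ∀ i, z i ∈ X)
    (hz_proj : ∀ i, ∀ w ∈ X, dist (v i) (z i) ≤ dist (v i) w) :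
    ∑ i, ‖z i - (m : ℝ)⁻¹ • ∑ ℓ, z ℓ‖ ≤ 2 * ∑ i, ‖v i - (m : ℝ)⁻¹ • ∑ ℓ, v ℓ‖ :=
  sum_dist_proj_avg_le_general X hX_convex v z hz_mem hz_proj
end

section
/- (Deviation of a projected gradient step.) Let X ⊆ Y ⊆ ℝ^d with X nonempty, closed and convex and Y closed and convex. Let f:ℝ^d→ℝ be convex and differentiable with L-Lipschitz gradient on ℝ^d, and suppose ‖∇f(z)‖ ≤ G_f for all z ∈ X. Then for every v ∈ ℝ^d and every α > 0: ‖Π_Y[v − α∇f(v)] − v‖ ≤ (2 + αL)·dist(v, X) + α·G_f. -/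
/-!
Take `x ∈ X` nearest to `v`. Since `x ∈ Y`, the angle at `p` between `v − α∇f(v)` and `x` is obtuse,
so projecting onto `Y` does not move the point farther from `x`: `‖p − x‖ ≤ ‖v − x‖ + α‖∇f(v)‖`.
The triangle inequality through `x` then gives `‖p − v‖ ≤ 2‖v − x‖ + α‖∇f(v)‖`. Finally the Lipschitz bound compares `∇f(v)` with
`∇f(x)`, whose norm is at most `G_f`.
-/

open Metric

section Projection

variable {E : Type*} [NormedAddCommGroup E] [InnerProductSpace ℝ E] {Y : Set E} {u p x : E}

theorem Convex.real_inner_sub_le_zero_of_forall_dist_le (hY : Convex ℝ Y) (hp : p ∈ Y)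
    (hmin : ∀ w ∈ Y, dist u p ≤ dist u w) (hx : x ∈ Y) : inner ℝ (u - p) (x - p) ≤ 0 := by
  have : Nonempty Y := ⟨⟨p, hp⟩⟩
  have hbdd : BddBelow (Set.range fun w : Y => ‖u - w‖) :=
    ⟨0, by rintro r ⟨w, rfl⟩; exact norm_nonneg _⟩
  have hinf : ‖u - p‖ = ⨅ w : Y, ‖u - w‖ :=
    le_antisymm (le_ciInf fun w => by simpa only [dist_eq_norm] using hmin w w.2)
      (ciInf_le hbdd ⟨p, hp⟩)
  exact (norm_eq_iInf_iff_real_inner_le_zero hY hp).mp hinf x hx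

theorem Convex.norm_sub_le_of_forall_dist_le (hY : Convex ℝ Y) (hp : p ∈ Y)
    (hmin : ∀ w ∈ Y, dist u p ≤ dist u w) (hx : x ∈ Y) : ‖p - x‖ ≤ ‖u - x‖ := by
  have hobtuse : 0 ≤ inner ℝ (u - p) (p - x) := by
    rw [← neg_sub x p, inner_neg_right, neg_nonneg]
    exact hY.real_inner_sub_le_zero_of_forall_dist_le hp hmin hx
  have hexpand := norm_add_sq_real (u - p) (p - x)
  rw [sub_add_sub_cancel] at hexpand
  have hsq : ‖p - x‖ ^ 2 ≤ ‖u - x‖ ^ 2 := by linarith [sq_nonneg ‖u - p‖]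
  exact (pow_le_pow_iff_left₀ (norm_nonneg _) (norm_nonneg _) two_ne_zero).mp hsq

theorem Convex.norm_sub_le_two_mul_add_of_forall_dist_le (hY : Convex ℝ Y) (hp : p ∈ Y)
    (hmin : ∀ w ∈ Y, dist u p ≤ dist u w) (hx : x ∈ Y) (v : E) :
    ‖p - v‖ ≤ 2 * ‖v - x‖ + ‖u - v‖ :=
  calc ‖p - v‖ ≤ ‖p - x‖ + ‖x - v‖ := norm_sub_le_norm_sub_add_norm_sub p x v
    _ ≤ ‖u - x‖ + ‖v - x‖ := by
      rw [norm_sub_rev x v]; gcongr; exact hY.norm_sub_le_of_forall_dist_le hp hmin hx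
    _ ≤ (‖u - v‖ + ‖v - x‖) + ‖v - x‖ := by
      gcongr; exact norm_sub_le_norm_sub_add_norm_sub u v x
    _ = 2 * ‖v - x‖ + ‖u - v‖ := by ring

end Projection

theorem projected_gradient_step_deviation_general
    {d : ℕ} (X Y : Set (EuclideanSpace ℝ (Fin d)))
    (hXY : X ⊆ Y)
    (hX_ne : X.Nonempty) (hX_closed : IsClosed X)
    (hY_convex : Convex ℝ Y)
    (g : EuclideanSpace ℝ (Fin d) → EuclideanSpace ℝ (Fin d))
    (L : ℝ)
    (hlip : ∀ w w', ‖g w - g w'‖ ≤ L * ‖w - w'‖)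
    (Gf : ℝ) (hGf : ∀ w ∈ X, ‖g w‖ ≤ Gf)
    (v : EuclideanSpace ℝ (Fin d)) (α : ℝ) (hα : 0 < α)
    (p : EuclideanSpace ℝ (Fin d))
    -- `p = Π_Y[v − α∇f(v)]`, characterized as the closest point of `Y`
    (hp_mem : p ∈ Y)
    (hp_proj : ∀ w ∈ Y, dist (v - α • g v) p ≤ dist (v - α • g v) w) :
    ‖p - v‖ ≤ (2 + α * L) * infDist v X + α * Gf := by
  obtain ⟨x, hxX, hx_dist⟩ := hX_closed.exists_infDist_eq_dist hX_ne v
  have hgv : ‖g v‖ ≤ Gf + L * ‖v - x‖ :=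
    calc ‖g v‖ ≤ ‖g x‖ + ‖g v - g x‖ := norm_le_insert' _ _
      _ ≤ Gf + L * ‖v - x‖ := add_le_add (hGf x hxX) (hlip v x)
  calc ‖p - v‖ ≤ 2 * ‖v - x‖ + ‖v - α • g v - v‖ :=
        hY_convex.norm_sub_le_two_mul_add_of_forall_dist_le hp_mem hp_proj (hXY hxX) v
    _ = 2 * ‖v - x‖ + α * ‖g v‖ := by
      rw [sub_sub_cancel_left, norm_neg, norm_smul, Real.norm_of_nonneg hα.le]
    _ ≤ 2 * ‖v - x‖ + α * (Gf + L * ‖v - x‖) := by gcongr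
    _ = (2 + α * L) * infDist v X + α * Gf := by rw [hx_dist, dist_eq_norm]; ring

/-- **Deviation of a projected gradient step.**
Let `X ⊆ Y ⊆ ℝ^d`, `X` nonempty closed convex, `Y` closed convex, `f` convex
differentiable with `L`-Lipschitz gradient and `‖∇f‖ ≤ G_f` on `X`. Then for every
`v` and `α > 0`: `‖Π_Y[v − α∇f(v)] − v‖ ≤ (2 + αL)·dist(v,X) + α·G_f`. -/
theorem projected_gradient_step_deviation
    {d : ℕ} (X Y : Set (EuclideanSpace ℝ (Fin d)))
    (hXY : X ⊆ Y)
    (hX_ne : X.Nonempty) (hX_closed : IsClosed X) (hX_convex : Convex ℝ X)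
    (hY_closed : IsClosed Y) (hY_convex : Convex ℝ Y)
    (f : EuclideanSpace ℝ (Fin d) → ℝ)
    (g : EuclideanSpace ℝ (Fin d) → EuclideanSpace ℝ (Fin d))
    (hf_convex : ConvexOn ℝ Set.univ f)
    (hf_grad : ∀ w, HasGradientAt f (g w) w)
    (L : ℝ) (hL : 0 ≤ L)
    (hlip : ∀ w w', ‖g w - g w'‖ ≤ L * ‖w - w'‖)
    (Gf : ℝ) (hGf : ∀ w ∈ X, ‖g w‖ ≤ Gf)
    (v : EuclideanSpace ℝ (Fin d)) (α : ℝ) (hα : 0 < α)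
    (p : EuclideanSpace ℝ (Fin d))
    -- `p = Π_Y[v − α∇f(v)]`, characterized as the closest point of `Y`
    (hp_mem : p ∈ Y)
    (hp_proj : ∀ w ∈ Y, dist (v - α • g v) p ≤ dist (v - α • g v) w) :
    ‖p - v‖ ≤ (2 + α * L) * infDist v X + α * Gf :=
  projected_gradient_step_deviation_general X Y hXY hX_ne hX_closed hY_convex g L hlip Gf hGf v α hα
    p hp_mem hp_proj
end
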